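/- arXiv:1607.06627 — 8 statements merged into one kernel-verified Lean document; each statement's English description precedes it below -/
import Mathlib

section
/- Twin-image elimination: let f > 0 and let Ω ⊆ ℝ^m be measurable. For every h ∈ L²_Ω, the function D(Th) coincides with D²(h) almost everywhere on ℝ^m ∖ Ω; consequently ‖Th‖ ≥ ‖D²(h)·1_{ℝ^m∖Ω}‖, where 1_{ℝ^m∖Ω} denotes the indicator function of the complement of Ω. -/
open MeasureTheory Complex Real Filter
open scoped ENNReal InnerProductSpace

noncomputable section

/-- Euclidean space `ℝ^m`. -/
abbrev ESp (m : ℕ) := EuclideanSpace ℝ (Fin m)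

/-- `L²(ℝ^m, ℂ)`. -/
abbrev L2S (m : ℕ) := Lp ℂ 2 (volume : Measure (ESp m))

/-- `F` is the unitary Fourier transform on `L²(ℝ^m, ℂ)`: on `L¹ ∩ L²` it is given by
`F(h)(ξ) = (2π)^{-m/2} ∫_{ℝ^m} h(x) e^{-i⟨ξ,x⟩} dx`.  (This property determines `F`
uniquely by density of `L¹ ∩ L²` in `L²`.) -/
def IsFourierTransform (m : ℕ) (F : L2S m ≃ₗᵢ[ℂ] L2S m) : Prop :=
  ∀ (h : ESp m → ℂ) (_ : MeasureTheory.Integrable h) (h2 : MeasureTheory.MemLp h 2 volume),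
    (F (h2.toLp h) : ESp m → ℂ) =ᵐ[volume]
      fun ξ => (((2 * π) ^ (-(m : ℝ) / 2) : ℝ) : ℂ) *
        ∫ x, h x * Complex.exp (-Complex.I * (⟪ξ, x⟫_ℝ : ℝ))

/-- `D` is the Fresnel propagator to Fresnel number `f` associated with the Fourier
transform `F`, i.e. the unitary operator `D = F⁻¹ (m_f · F ·)` with
`m_f(ξ) = exp(-i|ξ|²/(2f))`. -/
def IsFresnel (m : ℕ) (f : ℝ) (F D : L2S m ≃ₗᵢ[ℂ] L2S m) : Prop :=
  ∀ u : L2S m, (F (D u) : ESp m → ℂ) =ᵐ[volume]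
    fun ξ => Complex.exp (-Complex.I * ((‖ξ‖ ^ 2 / (2 * f) : ℝ) : ℂ)) * (F u : ESp m → ℂ) ξ

/-- `T` is the linearized contrast-transfer forward operator `T h = 2 Re (D h)`
associated with the Fresnel propagator `D`. -/
def IsCTFOp (m : ℕ) (D : L2S m ≃ₗᵢ[ℂ] L2S m) (T : L2S m → L2S m) : Prop :=
  ∀ u : L2S m, (T u : ESp m → ℂ) =ᵐ[volume]
    fun x => ((2 * ((D u : ESp m → ℂ) x).re : ℝ) : ℂ)

namespace TwinAux

variable {m : ℕ}

lemma memLp_conj {p : ℝ≥0∞} {g : ESp m → ℂ} (hg : MemLp g p volume) :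
    MemLp (fun x => (starRingEnd ℂ) (g x)) p volume := by
  refine ⟨RCLike.continuous_conj.comp_aestronglyMeasurable hg.1, ?_⟩
  have he : eLpNorm (fun x => (starRingEnd ℂ) (g x)) p (volume : Measure (ESp m))
      = eLpNorm g p volume := by
    apply eLpNorm_congr_norm_ae
    filter_upwards with x using by simp
  rw [he]; exact hg.2

/-- Pointwise complex conjugation as a map on `L²`. -/
def conjLp (u : L2S m) : L2S m := (memLp_conj (Lp.memLp u)).toLp _

lemma coeFn_conjLp (u : L2S m) :
    (conjLp u : ESp m → ℂ) =ᵐ[volume]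
      fun x => (starRingEnd ℂ) ((u : ESp m → ℂ) x) :=
  MemLp.coeFn_toLp _

lemma conjLp_sub (u v : L2S m) : conjLp (u - v) = conjLp u - conjLp v := by
  apply Lp.ext
  filter_upwards [coeFn_conjLp (u - v), coeFn_conjLp u, coeFn_conjLp v,
    Lp.coeFn_sub u v, Lp.coeFn_sub (conjLp u) (conjLp v)] with x h1 h2 h3 h4 h5
  rw [h1, h5, Pi.sub_apply, h2, h3, h4, Pi.sub_apply, map_sub]

lemma norm_conjLp (u : L2S m) : ‖conjLp u‖ = ‖u‖ := by
  rw [Lp.norm_def, Lp.norm_def]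
  congr 1
  rw [eLpNorm_congr_ae (coeFn_conjLp u)]
  apply eLpNorm_congr_norm_ae
  filter_upwards with x using by simp

/-- Negation on `ℝ^m` is measure preserving. -/
lemma negMP (m : ℕ) :
    MeasurePreserving (fun x : ESp m => -x) volume volume :=
  Measure.measurePreserving_neg _

/-- Composition with negation as a map on `L²`. -/
def RLp (u : L2S m) : L2S m :=
  Lp.compMeasurePreserving (fun x : ESp m => -x) (negMP m) u

lemma coeFn_RLp (u : L2S m) :
    (RLp u : ESp m → ℂ) =ᵐ[volume] fun x => (u : ESp m → ℂ) (-x) :=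
  Lp.coeFn_compMeasurePreserving u (negMP m)

lemma RLp_sub (u v : L2S m) : RLp (u - v) = RLp u - RLp v :=
  map_sub (Lp.compMeasurePreserving (fun x : ESp m => -x) (negMP m)) u v

lemma norm_RLp (u : L2S m) : ‖RLp u‖ = ‖u‖ :=
  Lp.norm_compMeasurePreserving u (negMP m)

set_option maxHeartbeats 1000000 in
/-- The key conjugation-reflection identity for the Fourier transform. -/
lemma key (F : L2S m ≃ₗᵢ[ℂ] L2S m) (hF : IsFourierTransform m F) (u : L2S m) :
    F (conjLp u) = conjLp (RLp (F u)) := by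
  -- The claim for nice (continuous compactly supported) functions.
  have nice : ∀ (g : ESp m → ℂ), Continuous g → HasCompactSupport g →
      ∀ (gmem : MemLp g 2 (volume : Measure (ESp m))),
      F (conjLp (gmem.toLp g)) = conjLp (RLp (F (gmem.toLp g))) := by
    intro g gcont gcs gmem
    set v : L2S m := gmem.toLp g with hv
    have hint : Integrable g volume := gcont.integrable_of_hasCompactSupport gcs
    have hintc : Integrable (fun x => (starRingEnd ℂ) (g x)) volume :=
      memLp_one_iff_integrable.mp (memLp_conj (memLp_one_iff_integrable.mpr hint))
    set c : ℂ := (((2 * π) ^ (-(m : ℝ) / 2) : ℝ) : ℂ) with hc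
    set φ : ESp m → ℂ :=
      fun ξ => c * ∫ x, g x * Complex.exp (-Complex.I * (⟪ξ, x⟫_ℝ : ℝ)) with hφ
    set ψ : ESp m → ℂ :=
      fun ξ => c * ∫ x, (starRingEnd ℂ) (g x) *
        Complex.exp (-Complex.I * (⟪ξ, x⟫_ℝ : ℝ)) with hψ
    -- pointwise: conj (φ (-ξ)) = ψ ξ
    have hpt : ∀ ξ : ESp m, (starRingEnd ℂ) (φ (-ξ)) = ψ ξ := by
      intro ξ
      simp only [hφ, hψ]
      rw [map_mul, Complex.conj_ofReal, ← integral_conj]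
      congr 1
      apply integral_congr_ae
      filter_upwards with x
      rw [map_mul, ← Complex.exp_conj, map_mul, map_neg, Complex.conj_I,
        Complex.conj_ofReal, inner_neg_left]
      push_cast
      ring_nf
    -- LHS of the claim
    have hvconj : conjLp v = (memLp_conj gmem).toLp _ := by
      apply Lp.ext
      filter_upwards [coeFn_conjLp v, gmem.coeFn_toLp, (memLp_conj gmem).coeFn_toLp]
        with x h1 h2 h3
      rw [h1, h2, h3]
    have hL : (F (conjLp v) : ESp m → ℂ) =ᵐ[volume] ψ := by
      rw [hvconj]
      exact hF _ hintc (memLp_conj gmem)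
    -- RHS of the claim
    have hFv : (F v : ESp m → ℂ) =ᵐ[volume] φ := hF g hint gmem
    have hcomp : ((F v : ESp m → ℂ) ∘ fun x : ESp m => -x) =ᵐ[volume]
        (φ ∘ fun x : ESp m => -x) :=
      (negMP m).quasiMeasurePreserving.ae_eq_comp hFv
    have hR : (conjLp (RLp (F v)) : ESp m → ℂ) =ᵐ[volume] ψ := by
      filter_upwards [coeFn_conjLp (RLp (F v)), coeFn_RLp (F v), hcomp] with x h1 h2 h3
      rw [h1, h2, show (F v : ESp m → ℂ) (-x) = φ (-x) from h3, hpt x]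
    exact Lp.ext (hL.trans hR.symm)
  -- Density argument.
  have main : ∀ ε : ℝ, 0 < ε →
      ‖F (conjLp u) - conjLp (RLp (F u))‖ ≤ 2 * ε := by
    intro ε hε
    obtain ⟨g, gcs, hgu, gcont, gmem⟩ :=
      (Lp.memLp u).exists_hasCompactSupport_eLpNorm_sub_le
        (by norm_num : (2 : ℝ≥0∞) ≠ ∞) (ε := ENNReal.ofReal ε)
        (ENNReal.ofReal_pos.mpr hε).ne'
    set v : L2S m := gmem.toLp g with hv
    have hmid : F (conjLp v) = conjLp (RLp (F v)) := nice g gcont gcs gmem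
    have huv : ‖u - v‖ ≤ ε := by
      rw [Lp.norm_def]
      have he : eLpNorm ((u - v : L2S m) : ESp m → ℂ) 2 volume
          = eLpNorm ((u : ESp m → ℂ) - g) 2 volume := by
        apply eLpNorm_congr_ae
        filter_upwards [Lp.coeFn_sub u v, gmem.coeFn_toLp] with x h1 h2
        rw [h1, Pi.sub_apply, Pi.sub_apply, h2]
      rw [he]
      exact ENNReal.toReal_le_of_le_ofReal hε.le hgu
    have e1 : ‖F (conjLp u) - F (conjLp v)‖ = ‖u - v‖ := by
      rw [← map_sub, F.norm_map, ← conjLp_sub, norm_conjLp]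
    have e2 : ‖conjLp (RLp (F v)) - conjLp (RLp (F u))‖ = ‖u - v‖ := by
      rw [← conjLp_sub, norm_conjLp, ← RLp_sub, norm_RLp, ← map_sub, F.norm_map,
        norm_sub_rev]
    calc ‖F (conjLp u) - conjLp (RLp (F u))‖
        = ‖(F (conjLp u) - F (conjLp v))
            + (conjLp (RLp (F v)) - conjLp (RLp (F u)))‖ := by
          rw [hmid]; congr 1; abel
      _ ≤ ‖F (conjLp u) - F (conjLp v)‖
            + ‖conjLp (RLp (F v)) - conjLp (RLp (F u))‖ := norm_add_le _ _
      _ ≤ ε + ε := by rw [e1, e2]; exact add_le_add huv huv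
      _ = 2 * ε := by ring
  have hzero : ‖F (conjLp u) - conjLp (RLp (F u))‖ ≤ 0 := by
    apply le_of_forall_pos_le_add
    intro ε hε
    have := main (ε / 2) (by positivity)
    linarith
  have := norm_le_zero_iff.mp hzero
  exact sub_eq_zero.mp this

/-- The twin-image identity: `D (conj (D h)) = conj h`. -/
lemma key2 {f : ℝ} (F D : L2S m ≃ₗᵢ[ℂ] L2S m) (hF : IsFourierTransform m F)
    (hD : IsFresnel m f F D) (h : L2S m) :
    D (conjLp (D h)) = conjLp h := by
  apply F.injective
  apply Lp.ext
  set mf : ESp m → ℂ :=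
    fun ξ => Complex.exp (-Complex.I * ((‖ξ‖ ^ 2 / (2 * f) : ℝ) : ℂ)) with hmf
  have hmf1 : ∀ ξ : ESp m, mf ξ * (starRingEnd ℂ) (mf ξ) = 1 := by
    intro ξ
    rw [hmf]
    simp only [← Complex.exp_conj, ← Complex.exp_add, map_mul, map_neg, Complex.conj_I,
      Complex.conj_ofReal]
    ring_nf
    exact Complex.exp_zero
  have hmfneg : ∀ ξ : ESp m, mf (-ξ) = mf ξ := by
    intro ξ; simp [hmf, norm_neg]
  have h2 : F (conjLp (D h)) = conjLp (RLp (F (D h))) := key F hF (D h)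
  have h3 : ((F (D h) : ESp m → ℂ) ∘ fun x : ESp m => -x) =ᵐ[volume]
      ((fun ξ => mf ξ * (F h : ESp m → ℂ) ξ) ∘ fun x : ESp m => -x) :=
    (negMP m).quasiMeasurePreserving.ae_eq_comp (hD h)
  have h4 : (F (conjLp (D h)) : ESp m → ℂ) =ᵐ[volume]
      fun ξ => (starRingEnd ℂ) (mf ξ) * (starRingEnd ℂ) ((F h : ESp m → ℂ) (-ξ)) := by
    rw [h2]
    filter_upwards [coeFn_conjLp (RLp (F (D h))), coeFn_RLp (F (D h)), h3] with ξ a1 a2 a3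
    rw [a1, a2, show (F (D h) : ESp m → ℂ) (-ξ)
        = mf (-ξ) * (F h : ESp m → ℂ) (-ξ) from a3, map_mul, hmfneg]
  have h5 : (F (D (conjLp (D h))) : ESp m → ℂ) =ᵐ[volume]
      fun ξ => (starRingEnd ℂ) ((F h : ESp m → ℂ) (-ξ)) := by
    filter_upwards [hD (conjLp (D h)), h4] with ξ a1 a4
    rw [a1, a4, ← mul_assoc, hmf1, one_mul]
  have h6 : (F (conjLp h) : ESp m → ℂ) =ᵐ[volume]
      fun ξ => (starRingEnd ℂ) ((F h : ESp m → ℂ) (-ξ)) := by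
    rw [key F hF h]
    filter_upwards [coeFn_conjLp (RLp (F h)), coeFn_RLp (F h)] with ξ a1 a2
    rw [a1, a2]
  exact h5.trans h6.symm

end TwinAux

open TwinAux

/-- **twin-image elimination.** For `h ∈ L²_Ω`, the function `D(Th)`
coincides with `D²(h)` a.e. on `ℝ^m ∖ Ω`; consequently
`‖Th‖ ≥ ‖D²(h)·1_{ℝ^m∖Ω}‖` (stated via `L²`-(e)norms). -/
theorem statement1 (m : ℕ) (hm : 1 ≤ m) (f : ℝ) (hf : 0 < f)
    (F D : L2S m ≃ₗᵢ[ℂ] L2S m) (hF : IsFourierTransform m F) (hD : IsFresnel m f F D)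
    (T : L2S m → L2S m) (hT : IsCTFOp m D T)
    (Ω : Set (ESp m)) (hΩ : MeasurableSet Ω)
    (h : L2S m)
    (hsupp : ∀ᵐ x ∂(volume : Measure (ESp m)), x ∉ Ω → (h : ESp m → ℂ) x = 0) :
    (∀ᵐ x ∂(volume : Measure (ESp m)), x ∉ Ω →
        (D (T h) : ESp m → ℂ) x = (D (D h) : ESp m → ℂ) x) ∧
    eLpNorm (Ωᶜ.indicator (D (D h) : ESp m → ℂ)) 2 volume
      ≤ eLpNorm (T h : ESp m → ℂ) 2 volume := by
  -- `T h = D h + conj (D h)` in `L²`.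
  have hTh : T h = D h + conjLp (D h) := by
    apply Lp.ext
    filter_upwards [hT h, Lp.coeFn_add (D h) (conjLp (D h)), coeFn_conjLp (D h)]
      with x h1 h2 h3
    rw [h1, h2, Pi.add_apply, h3, Complex.add_conj]
  have hDTh : D (T h) = D (D h) + conjLp h := by
    rw [hTh, map_add, key2 F D hF hD h]
  have hco : (D (T h) : ESp m → ℂ) =ᵐ[volume]
      fun x => (D (D h) : ESp m → ℂ) x + (starRingEnd ℂ) ((h : ESp m → ℂ) x) := by
    rw [hDTh]
    filter_upwards [Lp.coeFn_add (D (D h)) (conjLp h), coeFn_conjLp h] with x h1 h2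
    rw [h1, Pi.add_apply, h2]
  have part1 : ∀ᵐ x ∂(volume : Measure (ESp m)), x ∉ Ω →
      (D (T h) : ESp m → ℂ) x = (D (D h) : ESp m → ℂ) x := by
    filter_upwards [hco, hsupp] with x h1 h2 hx
    rw [h1, h2 hx, map_zero, add_zero]
  refine ⟨part1, ?_⟩
  have hnormeq : eLpNorm ((D (T h) : L2S m) : ESp m → ℂ) 2 volume
      = eLpNorm ((T h : L2S m) : ESp m → ℂ) 2 volume := by
    rw [← ENNReal.ofReal_toReal (Lp.eLpNorm_ne_top (D (T h))),
      ← ENNReal.ofReal_toReal (Lp.eLpNorm_ne_top (T h)),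
      ← Lp.norm_def, ← Lp.norm_def, D.norm_map]
  have hind : Ωᶜ.indicator ((D (D h) : L2S m) : ESp m → ℂ)
      =ᵐ[volume] Ωᶜ.indicator ((D (T h) : L2S m) : ESp m → ℂ) := by
    filter_upwards [part1] with x hx
    by_cases hxΩ : x ∈ Ωᶜ
    · rw [Set.indicator_of_mem hxΩ, Set.indicator_of_mem hxΩ, hx hxΩ]
    · rw [Set.indicator_of_notMem hxΩ, Set.indicator_of_notMem hxΩ]
  calc eLpNorm (Ωᶜ.indicator ((D (D h) : L2S m) : ESp m → ℂ)) 2 volume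
      = eLpNorm (Ωᶜ.indicator ((D (T h) : L2S m) : ESp m → ℂ)) 2 volume :=
        eLpNorm_congr_ae hind
    _ ≤ eLpNorm ((D (T h) : L2S m) : ESp m → ℂ) 2 volume := eLpNorm_indicator_le _
    _ = eLpNorm ((T h : L2S m) : ESp m → ℂ) 2 volume := hnormeq
end
end

section
/- Kernel formula for the truncated Fourier transform: let f > 0, I := [-1/2, 1/2] and I_f := [-f/4, f/4] ⊂ ℝ. For every h ∈ L²(ℝ) with h = 0 almost everywhere outside I, one has F⁻¹(1_{I_f}·F(h))(x) = ∫_{-1/2}^{1/2} [sin((f/4)(x−y)) / (π(x−y))] · h(y) dy for almost every x ∈ ℝ. In particular, the operator F_f* F_f on L²_I — where F_f : L²_I → L²(I_f) is the restricted Fourier transform h ↦ (F h)|_{I_f} and F_f* its adjoint — is the integral operator with the sinc kernel k(x,y) = sin((f/4)(x−y))/(π(x−y)). -/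
open MeasureTheory Complex Real Filter
open scoped ENNReal InnerProductSpace

noncomputable section

/-- `L²(ℝ, ℂ)`. -/
abbrev L2R := Lp ℂ 2 (volume : Measure ℝ)

/-- `F` is the unitary Fourier transform on `L²(ℝ, ℂ)`: on `L¹ ∩ L²` it is given by
`F(h)(ξ) = (2π)^{-1/2} ∫_ℝ h(x) e^{-iξx} dx`. -/
def IsFourierTransform1 (F : L2R ≃ₗᵢ[ℂ] L2R) : Prop :=
  ∀ (h : ℝ → ℂ) (_ : MeasureTheory.Integrable h) (h2 : MeasureTheory.MemLp h 2 volume),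
    (F (h2.toLp h) : ℝ → ℂ) =ᵐ[volume]
      fun ξ => (((2 * π) ^ (-(1 : ℝ) / 2) : ℝ) : ℂ) *
        ∫ x, h x * Complex.exp (-Complex.I * (ξ * x))

set_option maxHeartbeats 1000000
/-- **kernel formula for the truncated Fourier transform.** Let `f > 0`,
`I = [-1/2, 1/2]`, `I_f = [-f/4, f/4]`.  For every `h ∈ L²(ℝ)` vanishing a.e. outside `I`,
the function `F⁻¹(1_{I_f}·F(h))` (represented by `v`) satisfies
`F⁻¹(1_{I_f}·F(h))(x) = ∫_{-1/2}^{1/2} sin((f/4)(x-y))/(π(x-y)) · h(y) dy` for a.e. `x`;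
i.e. `F_f* F_f` is the integral operator with the sinc kernel. -/
theorem statement4 (f : ℝ) (hf : 0 < f)
    (F : L2R ≃ₗᵢ[ℂ] L2R) (hF : IsFourierTransform1 F)
    (h : L2R)
    (hsupp : ∀ᵐ x ∂(volume : Measure ℝ),
      x ∉ Set.Icc (-(1/2) : ℝ) (1/2) → (h : ℝ → ℂ) x = 0)
    (v : L2R)
    (hv : (F v : ℝ → ℂ) =ᵐ[volume]
      (Set.Icc (-(f/4)) (f/4)).indicator (F h : ℝ → ℂ)) :
    (v : ℝ → ℂ) =ᵐ[volume] fun x =>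
      ∫ y in Set.Icc (-(1/2) : ℝ) (1/2),
        ((Real.sin ((f/4) * (x - y)) / (π * (x - y)) : ℝ) : ℂ) * (h : ℝ → ℂ) y := by
  have hπ2 : (0:ℝ) < 2 * π := by positivity
  set I : Set ℝ := Set.Icc (-(1/2) : ℝ) (1/2) with hIdef
  set If : Set ℝ := Set.Icc (-(f/4) : ℝ) (f/4) with hIfdef
  have hImeas : MeasurableSet I := measurableSet_Icc
  have hIfmeas : MeasurableSet If := measurableSet_Icc
  haveI hfinI : IsFiniteMeasure (volume.restrict I) :=
    ⟨by rw [Measure.restrict_apply_univ]; exact measure_Icc_lt_top⟩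
  haveI hfinIf : IsFiniteMeasure (volume.restrict If) :=
    ⟨by rw [Measure.restrict_apply_univ]; exact measure_Icc_lt_top⟩
  set cI : ℝ := (2 * π) ^ (-(1:ℝ) / 2) with hcI
  have hcc : (cI : ℂ) * (cI : ℂ) = (((2 * π)⁻¹ : ℝ) : ℂ) := by
    rw [← Complex.ofReal_mul]
    congr 1
    rw [hcI, ← Real.rpow_add hπ2]
    norm_num [Real.rpow_neg_one]
  -- integrability of h
  have hh2 : MemLp (h : ℝ → ℂ) 2 volume := Lp.memLp h
  have hhI : IntegrableOn (h : ℝ → ℂ) I volume := (hh2.restrict I).integrable one_le_two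
  have hhint : Integrable (h : ℝ → ℂ) volume := by
    refine (hhI.integrable_indicator hImeas).congr ?_
    filter_upwards [hsupp] with x hx
    by_cases hxI : x ∈ I
    · rw [Set.indicator_of_mem hxI]
    · rw [Set.indicator_of_notMem hxI, hx hxI]
  have hFh : (F h : ℝ → ℂ) =ᵐ[volume]
      fun ξ => (cI : ℂ) * ∫ x : ℝ, (h : ℝ → ℂ) x *
        Complex.exp (-Complex.I * ((ξ : ℂ) * (x : ℂ))) := by
    have := hF (h : ℝ → ℂ) hhint hh2
    rwa [Lp.toLp_coeFn] at this
  -- the kernel K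
  set K : ℝ → ℂ := fun t => ∫ ξ in If, Complex.exp (Complex.I * ((ξ : ℂ) * (t : ℂ))) with hK
  have hKval : ∀ t : ℝ, t ≠ 0 →
      K t = 2 * ((Real.sin (f / 4 * t) : ℝ) : ℂ) / (t : ℂ) := by
    intro t ht
    have htC : (t : ℂ) ≠ 0 := Complex.ofReal_ne_zero.mpr ht
    have hc0 : Complex.I * (t : ℂ) ≠ 0 := mul_ne_zero Complex.I_ne_zero htC
    have h1 : K t = ∫ ξ in If, Complex.exp ((Complex.I * (t:ℂ)) * (ξ:ℂ)) := by
      simp only [hK]; congr 1; funext ξ; congr 1; push_cast; ring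
    rw [h1, hIfdef, integral_Icc_eq_integral_Ioc,
      ← intervalIntegral.integral_of_le (by linarith : -(f/4) ≤ f/4),
      integral_exp_mul_complex hc0]
    have e1 : Complex.I * (t:ℂ) * ((f/4 : ℝ) : ℂ) = ((f/4 * t : ℝ) : ℂ) * Complex.I := by
      push_cast; ring
    have e2 : Complex.I * (t:ℂ) * ((-(f/4) : ℝ) : ℂ) = (-((f/4 * t : ℝ) : ℂ)) * Complex.I := by
      push_cast; ring
    rw [e1, e2, Complex.ofReal_sin, Complex.exp_mul_I, Complex.exp_mul_I,
      Complex.sin_neg, Complex.cos_neg]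
    field_simp
    ring
  -- the candidate function g
  set g : ℝ → ℂ := fun x => ∫ y in I,
      ((Real.sin (f/4 * (x - y)) / (π * (x - y)) : ℝ) : ℂ) * (h : ℝ → ℂ) y with hg
  have hgmeas : AEStronglyMeasurable g volume := by
    have hKc : StronglyMeasurable (fun p : ℝ × ℝ =>
        ((Real.sin (f/4 * (p.1 - p.2)) / (π * (p.1 - p.2)) : ℝ) : ℂ) * (h : ℝ → ℂ) p.2) := by
      apply StronglyMeasurable.mul
      · apply Measurable.stronglyMeasurable
        apply Complex.measurable_ofReal.comp
        exact (Real.continuous_sin.measurable.comp (by fun_prop)).div (by fun_prop)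
      · exact (Lp.stronglyMeasurable h).comp_measurable measurable_snd
    exact hKc.integral_prod_right'.aestronglyMeasurable
  have hker : ∀ t : ℝ, |Real.sin (f/4 * t) / (π * t)| ≤ f / (4 * π) := by
    intro t
    rcases eq_or_ne t 0 with rfl | ht
    · simp
      positivity
    · rw [abs_div, abs_mul, div_le_iff₀ (by positivity)]
      calc |Real.sin (f/4 * t)| ≤ |f/4 * t| := Real.abs_sin_le_abs
        _ = f/4 * |t| := by rw [abs_mul, _root_.abs_of_nonneg (by linarith : (0:ℝ) ≤ f/4)]
        _ = f / (4*π) * (|π| * |t|) := by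
            rw [_root_.abs_of_pos Real.pi_pos]
            field_simp
  have hgbdd : ∀ x : ℝ, ‖g x‖ ≤ (f / (4*π)) * ∫ y in I, ‖(h : ℝ → ℂ) y‖ := by
    intro x
    rw [hg]
    calc ‖∫ y in I, ((Real.sin (f/4 * (x - y)) / (π * (x - y)) : ℝ) : ℂ) * (h : ℝ → ℂ) y‖
        ≤ ∫ y in I, ‖((Real.sin (f/4 * (x - y)) / (π * (x - y)) : ℝ) : ℂ) * (h : ℝ → ℂ) y‖ :=
          norm_integral_le_integral_norm _
      _ ≤ ∫ y in I, (f/(4*π)) * ‖(h : ℝ → ℂ) y‖ := by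
          refine integral_mono_of_nonneg (Filter.Eventually.of_forall fun y => norm_nonneg _)
            (hhI.norm.const_mul _) (Filter.Eventually.of_forall fun y => ?_)
          dsimp only
          rw [norm_mul]
          refine mul_le_mul_of_nonneg_right ?_ (norm_nonneg _)
          rw [Complex.norm_real, Real.norm_eq_abs]
          exact hker (x - y)
      _ = (f/(4*π)) * ∫ y in I, ‖(h : ℝ → ℂ) y‖ := integral_const_mul _ _
  have hgint : ∀ s : Set ℝ, MeasurableSet s → volume s < ∞ → IntegrableOn g s volume := by
    intro s hs hμs
    haveI : IsFiniteMeasure (volume.restrict s) := ⟨by rwa [Measure.restrict_apply_univ]⟩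
    exact (integrable_const ((f/(4*π)) * ∫ y in I, ‖(h : ℝ → ℂ) y‖)).mono'
      hgmeas.restrict (Filter.Eventually.of_forall hgbdd)
  have hvint : ∀ s : Set ℝ, MeasurableSet s → volume s < ∞ →
      IntegrableOn (v : ℝ → ℂ) s volume := by
    intro s hs hμs
    haveI : IsFiniteMeasure (volume.restrict s) := ⟨by rwa [Measure.restrict_apply_univ]⟩
    exact ((Lp.memLp v).restrict s).integrable one_le_two
  have key : ∀ s : Set ℝ, MeasurableSet s → volume s < ∞ →
      ∫ x in s, (v : ℝ → ℂ) x = ∫ x in s, g x := by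
    intro s hs hμs
    haveI : IsFiniteMeasure (volume.restrict s) := ⟨by rwa [Measure.restrict_apply_univ]⟩
    set φ : ℝ → ℂ := s.indicator fun _ => (1:ℂ) with hφdef
    have hφ2 : MemLp φ 2 volume := memLp_indicator_const 2 hs 1 (Or.inr hμs.ne)
    have hφ1 : Integrable φ volume :=
      (integrable_indicator_iff hs).mpr (integrableOn_const hμs.ne)
    set Φ : L2R := hφ2.toLp φ with hΦdef
    have hΦcoe : (Φ : ℝ → ℂ) =ᵐ[volume] φ := hφ2.coeFn_toLp
    have hFΦ : (F Φ : ℝ → ℂ) =ᵐ[volume]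
        fun ξ => (cI:ℂ) * ∫ x : ℝ, φ x * Complex.exp (-Complex.I * ((ξ:ℂ) * (x:ℂ))) :=
      hF φ hφ1 hφ2
    set A : ℝ → ℂ := fun ξ => ∫ x in s, Complex.exp (Complex.I * ((ξ:ℂ) * (x:ℂ))) with hA
    set B : ℝ → ℂ := fun ξ => ∫ y in I, (h : ℝ → ℂ) y *
      Complex.exp (-Complex.I * ((ξ:ℂ) * (y:ℂ))) with hB
    have step1 : ∫ x in s, (v : ℝ → ℂ) x
        = ∫ ξ in If, ((cI:ℂ) * (cI:ℂ)) * (A ξ * B ξ) := by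
      have i1 : ∫ x in s, (v : ℝ → ℂ) x = (⟪Φ, v⟫_ℂ : ℂ) := by
        rw [L2.inner_def, ← integral_indicator hs]
        refine integral_congr_ae ?_
        filter_upwards [hΦcoe] with x hx
        rw [RCLike.inner_apply, hx, hφdef]
        by_cases hxs : x ∈ s
        · simp [Set.indicator_of_mem hxs]
        · simp [Set.indicator_of_notMem hxs]
      rw [i1, ← F.inner_map_map Φ v, L2.inner_def, ← integral_indicator hIfmeas]
      refine integral_congr_ae ?_
      filter_upwards [hFΦ, hv, hFh] with ξ h1 h2 h3
      rw [RCLike.inner_apply, h1, h2]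
      by_cases hξ : ξ ∈ If
      · rw [Set.indicator_of_mem hξ, Set.indicator_of_mem hξ, h3]
        have eA : (∫ x : ℝ, φ x * Complex.exp (-Complex.I * ((ξ:ℂ) * (x:ℂ))))
            = ∫ x in s, Complex.exp (-Complex.I * ((ξ:ℂ) * (x:ℂ))) := by
          rw [← integral_indicator hs]
          congr 1; funext x
          rw [hφdef]
          by_cases hxs : x ∈ s
          · simp [Set.indicator_of_mem hxs]
          · simp [Set.indicator_of_notMem hxs]
        have eB : (∫ x : ℝ, (h : ℝ → ℂ) x * Complex.exp (-Complex.I * ((ξ:ℂ) * (x:ℂ))))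
            = B ξ := by
          rw [hB]
          refine (setIntegral_eq_integral_of_ae_compl_eq_zero ?_).symm
          filter_upwards [hsupp] with y hy hyI
          rw [hy hyI, zero_mul]
        have econj : (starRingEnd ℂ) (∫ x in s, Complex.exp (-Complex.I * ((ξ:ℂ) * (x:ℂ))))
            = A ξ := by
          rw [← integral_conj, hA]
          congr 1; funext x
          rw [← Complex.exp_conj]
          congr 1
          simp [map_mul, Complex.conj_I, Complex.conj_ofReal]
        rw [eA, eB, map_mul, econj, Complex.conj_ofReal]
        ring
      · rw [Set.indicator_of_notMem hξ, Set.indicator_of_notMem hξ, zero_mul]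
    have hPint : Integrable (fun q : ℝ × ℝ × ℝ =>
        Complex.exp (Complex.I * ((q.1:ℂ) * (q.2.1:ℂ))) *
          ((h : ℝ → ℂ) q.2.2 * Complex.exp (-Complex.I * ((q.1:ℂ) * (q.2.2:ℂ)))))
        ((volume.restrict If).prod ((volume.restrict s).prod (volume.restrict I))) := by
      have base : Integrable (fun q : ℝ × ℝ × ℝ => (h : ℝ → ℂ) q.2.2)
          ((volume.restrict If).prod ((volume.restrict s).prod (volume.restrict I))) := by
        have h1 : Integrable (fun z : ℝ × ℝ => (1:ℂ) * (h : ℝ → ℂ) z.2)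
            ((volume.restrict s).prod (volume.restrict I)) :=
          (integrable_const (μ := volume.restrict s) (1:ℂ)).mul_prod hhI
        have h2 := (integrable_const (μ := volume.restrict If) (1:ℂ)).mul_prod h1
        simpa using h2
      have hbd : Integrable (fun q : ℝ × ℝ × ℝ =>
          (Complex.exp (Complex.I * ((q.1:ℂ) * (q.2.1:ℂ))) *
            Complex.exp (-Complex.I * ((q.1:ℂ) * (q.2.2:ℂ)))) * (h : ℝ → ℂ) q.2.2)
          ((volume.restrict If).prod ((volume.restrict s).prod (volume.restrict I))) := by
        refine base.bdd_mul (c := 1) ?_ (Filter.Eventually.of_forall fun q => ?_)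
        · refine Continuous.aestronglyMeasurable ?_
          fun_prop
        · rw [norm_mul]
          simp [Complex.norm_exp, Complex.mul_re, Complex.I_re,
            Complex.I_im, Complex.mul_im]
      exact hbd.congr (Filter.Eventually.of_forall fun q => by ring)
    have swap : (∫ ξ in If, ∫ z : ℝ × ℝ, Complex.exp (Complex.I * ((ξ:ℂ) * (z.1:ℂ))) *
            ((h : ℝ → ℂ) z.2 * Complex.exp (-Complex.I * ((ξ:ℂ) * (z.2:ℂ))))
            ∂((volume.restrict s).prod (volume.restrict I)))
        = ∫ z : ℝ × ℝ, (∫ ξ in If, Complex.exp (Complex.I * ((ξ:ℂ) * (z.1:ℂ))) *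
            ((h : ℝ → ℂ) z.2 * Complex.exp (-Complex.I * ((ξ:ℂ) * (z.2:ℂ)))))
            ∂((volume.restrict s).prod (volume.restrict I)) :=
      integral_integral_swap hPint
    have prodmul : ∀ ξ : ℝ, A ξ * B ξ = ∫ z : ℝ × ℝ,
        Complex.exp (Complex.I * ((ξ:ℂ) * (z.1:ℂ))) *
          ((h : ℝ → ℂ) z.2 * Complex.exp (-Complex.I * ((ξ:ℂ) * (z.2:ℂ))))
        ∂((volume.restrict s).prod (volume.restrict I)) := fun ξ =>
      (integral_prod_mul (μ := volume.restrict s) (ν := volume.restrict I)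
        (fun x : ℝ => Complex.exp (Complex.I * ((ξ:ℂ) * (x:ℂ))))
        (fun y : ℝ => (h : ℝ → ℂ) y * Complex.exp (-Complex.I * ((ξ:ℂ) * (y:ℂ))))).symm
    have inner_eq : ∀ z : ℝ × ℝ,
        (∫ ξ in If, Complex.exp (Complex.I * ((ξ:ℂ) * (z.1:ℂ))) *
          ((h : ℝ → ℂ) z.2 * Complex.exp (-Complex.I * ((ξ:ℂ) * (z.2:ℂ)))))
        = (h : ℝ → ℂ) z.2 * K (z.1 - z.2) := by
      intro z
      have ptw : ∀ ξ : ℝ, Complex.exp (Complex.I * ((ξ:ℂ) * (z.1:ℂ))) *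
          ((h : ℝ → ℂ) z.2 * Complex.exp (-Complex.I * ((ξ:ℂ) * (z.2:ℂ))))
          = (h : ℝ → ℂ) z.2 * Complex.exp (Complex.I * ((ξ:ℂ) * ((z.1 - z.2 : ℝ) : ℂ))) := by
        intro ξ
        have e3 : Complex.exp (Complex.I * ((ξ:ℂ) * (z.1:ℂ))) *
            Complex.exp (-Complex.I * ((ξ:ℂ) * (z.2:ℂ)))
            = Complex.exp (Complex.I * ((ξ:ℂ) * ((z.1 - z.2 : ℝ) : ℂ))) := by
          rw [← Complex.exp_add]
          congr 1
          push_cast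
          ring
        calc Complex.exp (Complex.I * ((ξ:ℂ) * (z.1:ℂ))) *
            ((h : ℝ → ℂ) z.2 * Complex.exp (-Complex.I * ((ξ:ℂ) * (z.2:ℂ))))
            = (h : ℝ → ℂ) z.2 * (Complex.exp (Complex.I * ((ξ:ℂ) * (z.1:ℂ))) *
              Complex.exp (-Complex.I * ((ξ:ℂ) * (z.2:ℂ)))) := by ring
          _ = _ := by rw [e3]
      simp only [hK]
      simp_rw [ptw]
      rw [integral_const_mul]
    have hGint : Integrable (fun z : ℝ × ℝ => (h : ℝ → ℂ) z.2 * K (z.1 - z.2))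
        ((volume.restrict s).prod (volume.restrict I)) :=
      hPint.integral_prod_right.congr (Filter.Eventually.of_forall fun z => inner_eq z)
    have hiter : (∫ z : ℝ × ℝ, (h : ℝ → ℂ) z.2 * K (z.1 - z.2)
          ∂((volume.restrict s).prod (volume.restrict I)))
        = ∫ x in s, ∫ y in I, (h : ℝ → ℂ) y * K (x - y) :=
      integral_prod _ hGint
    have hxsing : ∀ x : ℝ, (volume.restrict I) {x} = 0 := by
      intro x
      rw [Measure.restrict_apply (measurableSet_singleton x)]
      exact measure_mono_null Set.inter_subset_left (measure_singleton x)
    have final : ∀ x : ℝ, ((cI:ℂ) * (cI:ℂ)) * ∫ y in I, (h : ℝ → ℂ) y * K (x - y) = g x := by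
      intro x
      rw [hg, ← integral_const_mul]
      refine integral_congr_ae ?_
      have hxae : ∀ᵐ y ∂(volume.restrict I), y ≠ x := by
        have hset : {y : ℝ | ¬ y ≠ x} = {x} := by ext y; simp
        rw [ae_iff, hset]
        exact hxsing x
      filter_upwards [hxae] with y hy
      have ht : x - y ≠ 0 := sub_ne_zero.mpr (Ne.symm hy)
      have htC : ((x - y : ℝ) : ℂ) ≠ 0 := Complex.ofReal_ne_zero.mpr ht
      have hπC : ((π : ℝ) : ℂ) ≠ 0 := Complex.ofReal_ne_zero.mpr Real.pi_ne_zero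
      rw [hKval (x - y) ht, hcc]
      push_cast at htC ⊢
      field_simp
    calc ∫ x in s, (v : ℝ → ℂ) x
        = ∫ ξ in If, ((cI:ℂ) * (cI:ℂ)) * (A ξ * B ξ) := step1
      _ = ((cI:ℂ) * (cI:ℂ)) * ∫ ξ in If, A ξ * B ξ := integral_const_mul _ _
      _ = ((cI:ℂ) * (cI:ℂ)) * ∫ ξ in If, (∫ z : ℝ × ℝ,
            Complex.exp (Complex.I * ((ξ:ℂ) * (z.1:ℂ))) *
              ((h : ℝ → ℂ) z.2 * Complex.exp (-Complex.I * ((ξ:ℂ) * (z.2:ℂ))))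
            ∂((volume.restrict s).prod (volume.restrict I))) := by
          rw [integral_congr_ae (Filter.Eventually.of_forall fun ξ => prodmul ξ)]
      _ = ((cI:ℂ) * (cI:ℂ)) * ∫ z : ℝ × ℝ, (∫ ξ in If,
            Complex.exp (Complex.I * ((ξ:ℂ) * (z.1:ℂ))) *
              ((h : ℝ → ℂ) z.2 * Complex.exp (-Complex.I * ((ξ:ℂ) * (z.2:ℂ)))))
            ∂((volume.restrict s).prod (volume.restrict I)) := by rw [swap]
      _ = ((cI:ℂ) * (cI:ℂ)) * ∫ z : ℝ × ℝ, (h : ℝ → ℂ) z.2 * K (z.1 - z.2)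
            ∂((volume.restrict s).prod (volume.restrict I)) := by
          rw [integral_congr_ae (Filter.Eventually.of_forall fun z => inner_eq z)]
      _ = ((cI:ℂ) * (cI:ℂ)) * ∫ x in s, ∫ y in I, (h : ℝ → ℂ) y * K (x - y) := by rw [hiter]
      _ = ∫ x in s, ((cI:ℂ) * (cI:ℂ)) * ∫ y in I, (h : ℝ → ℂ) y * K (x - y) :=
          (integral_const_mul _ _).symm
      _ = ∫ x in s, g x := integral_congr_ae (Filter.Eventually.of_forall fun x => final x)
  exact ae_eq_of_forall_setIntegral_eq_of_sigmaFinite hvint hgint key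
end
end

section
/- Stability estimate at the central CTF minimum (Lemma 4.3): let m ≥ 1, f > 0 and 0 ≤ α < ε ≤ π/6. Set C₀ := sin(π/6)²/(π/6)² = 9/π², b₀ := (2f(ε − α))^{1/2} and B₀ := {ξ ∈ ℝ^m : |ξ| < b₀}. Let φ ∈ L²(ℝ^m) have compact support, so that φ̂ := F(φ) is smooth, and set B₀⁻ := {ξ ∈ B₀ : Δ|φ̂|²(ξ) ≤ 0}. Then ∫_{B₀} s_α(ξ)² |φ̂(ξ)|² dξ ≥ C₀·[ ( (m/(m+4))(ε−α)² + (2m/(m+2))·α(ε−α) + α² )·∫_{B₀}|φ̂(ξ)|²dξ + f·( (2/(3(m+4)))·(ε−α)³ + (1/(m+2))·α(ε−α)² )·∫_{B₀⁻} Δ|φ̂|²(ξ) dξ ]. -/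
open MeasureTheory Complex Real Filter
open scoped ENNReal InnerProductSpace

noncomputable section

/-- The Laplacian `Δu(x) = Σᵢ ∂²u/∂xᵢ²(x)` of a function `u : ℝ^m → E`. -/
def lap (m : ℕ) {E : Type*} [NormedAddCommGroup E] [NormedSpace ℝ E]
    (u : ESp m → E) (x : ESp m) : E :=
  ∑ i : Fin m,
    fderiv ℝ (fun y => fderiv ℝ u y (EuclideanSpace.single i 1)) x (EuclideanSpace.single i 1)


namespace S11
open Set


lemma hasDerivAt_q (x : ℝ) : HasDerivAt (fun y : ℝ => y * max y 0) (2 * max x 0) x := by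
  rcases lt_trichotomy x 0 with h | rfl | h
  · have hev : (fun y : ℝ => y * max y 0) =ᶠ[nhds x] fun _ => 0 := by
      filter_upwards [eventually_lt_nhds h] with y hy
      simp [max_eq_right hy.le]
    have h0 : HasDerivAt (fun _ : ℝ => (0:ℝ)) 0 x := hasDerivAt_const x 0
    simpa [max_eq_right h.le] using h0.congr_of_eventuallyEq hev
  · have key : HasDerivAt (fun y : ℝ => y * max y 0) 0 0 := by
      rw [hasDerivAt_iff_tendsto_slope]
      have hs : ∀ y : ℝ, slope (fun y : ℝ => y * max y 0) 0 y = max y 0 := by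
        intro y
        rcases eq_or_ne y 0 with rfl | hy
        · simp [slope]
        · simp only [slope, sub_zero, vsub_eq_sub, smul_eq_mul, zero_mul]
          field_simp
      refine Tendsto.congr (fun y => (hs y).symm) ?_
      have : Filter.Tendsto (fun y : ℝ => max y 0) (nhds 0) (nhds 0) := by
        have := ((continuous_id.max (continuous_const : Continuous fun _ : ℝ => (0:ℝ)))).tendsto (0:ℝ)
        simpa using this
      exact this.mono_left nhdsWithin_le_nhds
    simpa using key
  · have hev : (fun y : ℝ => y * max y 0) =ᶠ[nhds x] fun y => y * y := by
      filter_upwards [eventually_gt_nhds h] with y hy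
      simp [max_eq_left hy.le]
    have h2 : HasDerivAt (fun y : ℝ => y * y) (2 * x) x := by
      exact ((hasDerivAt_id' x).mul (hasDerivAt_id' x)).congr_deriv (by ring)
    simpa [max_eq_left h.le] using h2.congr_of_eventuallyEq hev

lemma normsq_eq {k : ℕ} (x : EuclideanSpace ℝ (Fin k)) : ‖x‖ ^ 2 = ∑ j, x j ^ 2 := by
  rw [EuclideanSpace.norm_eq, Real.sq_sqrt (by positivity)]
  simp [Real.norm_eq_abs, sq_abs]

lemma sin_lb {t : ℝ} (h0 : 0 ≤ t) (h1 : t ≤ π / 6) : 3 / π * t ≤ Real.sin t := by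
  have hπ := Real.pi_pos
  have key := strictConcaveOn_sin_Icc.concaveOn.2 (x := 0) (y := π/6)
    (Set.mem_Icc.2 ⟨le_rfl, hπ.le⟩)
    (Set.mem_Icc.2 ⟨by positivity, by linarith⟩)
    (sub_nonneg.2 ((div_le_one hπ).2 (by linarith) : 6 * t / π ≤ 1))
    (by positivity : (0:ℝ) ≤ 6 * t / π) (by ring : (1 - 6*t/π) + 6*t/π = 1)
  rw [show ((1 - 6*t/π) • (0:ℝ) + (6*t/π) • (π/6)) = t by simp only [smul_eq_mul]; field_simp; ring] at key
  rw [Real.sin_zero, Real.sin_pi_div_six, smul_eq_mul, smul_eq_mul, mul_zero, zero_add] at key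
  calc 3 / π * t = 6 * t / π * (1/2) := by ring
    _ ≤ Real.sin t := key

lemma sin_sq_lb {t : ℝ} (h0 : 0 ≤ t) (h1 : t ≤ π / 6) : 9 / π ^ 2 * t ^ 2 ≤ Real.sin t ^ 2 := by
  have hπ := Real.pi_pos
  have h := sin_lb h0 h1
  have h3 : 0 ≤ 3 / π * t := by positivity
  calc 9 / π ^ 2 * t ^ 2 = (3 / π * t) ^ 2 := by ring
    _ ≤ Real.sin t ^ 2 := by nlinarith




def Gf (b2 ρ0 ρ1 s : ℝ) : ℝ := (b2 - s) * max (b2 - s) 0 * (ρ0 + ρ1 * s)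
def Gd (b2 ρ0 ρ1 s : ℝ) : ℝ := -(2 * max (b2 - s) 0) * (ρ0 + ρ1 * s) + (b2 - s) * max (b2 - s) 0 * ρ1
def Gin1 (b2 ρ0 ρ1 s : ℝ) : ℝ := -2 * (b2 - s) * (ρ0 + ρ1 * s) + (b2 - s) ^ 2 * ρ1
def Gin2 (b2 ρ0 ρ1 s : ℝ) : ℝ := 2 * (ρ0 + ρ1 * s) - 4 * (b2 - s) * ρ1

theorem hda_congr {f : ℝ → ℝ} {a b x : ℝ} (h : HasDerivAt f a x) (e : a = b) :
    HasDerivAt f b x := e ▸ h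

lemma Gf_cont (b2 ρ0 ρ1 : ℝ) : Continuous (Gf b2 ρ0 ρ1) := by unfold Gf; fun_prop
lemma Gd_cont (b2 ρ0 ρ1 : ℝ) : Continuous (Gd b2 ρ0 ρ1) := by unfold Gd; fun_prop
lemma Gin1_cont (b2 ρ0 ρ1 : ℝ) : Continuous (Gin1 b2 ρ0 ρ1) := by unfold Gin1; fun_prop
lemma Gin2_cont (b2 ρ0 ρ1 : ℝ) : Continuous (Gin2 b2 ρ0 ρ1) := by unfold Gin2; fun_prop

variable {b2 ρ0 ρ1 : ℝ}

lemma Gf_eq_of_le {s : ℝ} (h : s ≤ b2) : Gf b2 ρ0 ρ1 s = (b2 - s) ^ 2 * (ρ0 + ρ1 * s) := by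
  rw [Gf, max_eq_left (by linarith)]; ring

lemma Gf_eq_zero {s : ℝ} (h : b2 ≤ s) : Gf b2 ρ0 ρ1 s = 0 := by
  rcases eq_or_lt_of_le h with rfl | h'
  · simp [Gf]
  · rw [Gf, max_eq_right (by linarith)]; ring

lemma Gd_eq_of_le {s : ℝ} (h : s ≤ b2) : Gd b2 ρ0 ρ1 s = Gin1 b2 ρ0 ρ1 s := by
  rw [Gd, Gin1, max_eq_left (by linarith)]; ring

lemma Gd_eq_zero {s : ℝ} (h : b2 ≤ s) : Gd b2 ρ0 ρ1 s = 0 := by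
  rcases eq_or_lt_of_le h with rfl | h'
  · simp [Gd]
  · rw [Gd, max_eq_right (by linarith)]; ring

lemma hasDerivAt_Gf (b2 ρ0 ρ1 s : ℝ) : HasDerivAt (Gf b2 ρ0 ρ1) (Gd b2 ρ0 ρ1 s) s := by
  have ha : HasDerivAt (fun u : ℝ => b2 - u) (-1) s := (hasDerivAt_id s).const_sub b2
  have h1 : HasDerivAt (fun u : ℝ => (b2 - u) * max (b2 - u) 0) (-(2 * max (b2 - s) 0)) s := by
    have := (hasDerivAt_q (b2 - s)).comp s ha
    exact this.congr_deriv (by ring)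
  have h2 : HasDerivAt (fun u : ℝ => ρ0 + ρ1 * u) ρ1 s := by
    simpa using ((hasDerivAt_id s).const_mul ρ1).const_add ρ0
  have key := h1.mul h2
  have hfn : Gf b2 ρ0 ρ1 = fun u : ℝ => (b2 - u) * max (b2 - u) 0 * (ρ0 + ρ1 * u) := rfl
  rw [hfn]
  exact hda_congr key (by rw [Gd]; try ring)

lemma hasDerivAt_Gin1 (b2 ρ0 ρ1 s : ℝ) : HasDerivAt (Gin1 b2 ρ0 ρ1) (Gin2 b2 ρ0 ρ1 s) s := by
  have ha : HasDerivAt (fun u : ℝ => b2 - u) (-1) s := (hasDerivAt_id s).const_sub b2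
  have h2 : HasDerivAt (fun u : ℝ => ρ0 + ρ1 * u) ρ1 s := by
    simpa using ((hasDerivAt_id s).const_mul ρ1).const_add ρ0
  have h3 : HasDerivAt (fun u : ℝ => -2 * (b2 - u)) 2 s :=
    hda_congr (ha.const_mul (-2)) (by ring)
  have h4 : HasDerivAt (fun u : ℝ => (b2 - u) ^ 2) (2 * (b2 - s) * (-1)) s :=
    hda_congr (ha.pow 2) (by push_cast; ring)
  have key := (h3.mul h2).add (h4.mul_const ρ1)
  have heq : Gin1 b2 ρ0 ρ1 = fun u : ℝ => (-2 * (b2 - u)) * (ρ0 + ρ1 * u) + ((b2 - u) ^ 2) * ρ1 := by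
    funext u; rw [Gin1]; try ring
  rw [heq]
  exact hda_congr key (by rw [Gin2]; try ring)

lemma line_zero (b2 ρ0 ρ1 σ : ℝ) (hσ : σ ≠ b2)
    (γ γ1 γ2 : ℝ → ℝ) (hγ : ∀ t, HasDerivAt γ (γ1 t) t) (hγ1 : ∀ t, HasDerivAt γ1 (γ2 t) t)
    (hγ2c : Continuous γ2) :
    ∫ t : ℝ, ((if t ^ 2 + σ < b2 then
        Gin2 b2 ρ0 ρ1 (t ^ 2 + σ) * (2 * t) ^ 2 + 2 * Gin1 b2 ρ0 ρ1 (t ^ 2 + σ) else 0) * γ t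
      - Gf b2 ρ0 ρ1 (t ^ 2 + σ) * γ2 t) = 0 := by
  have hγd : Differentiable ℝ γ := fun t => (hγ t).differentiableAt
  have hγ1d : Differentiable ℝ γ1 := fun t => (hγ1 t).differentiableAt
  have hγc : Continuous γ := hγd.continuous
  have hγ1c : Continuous γ1 := hγ1d.continuous
  set h : ℝ → ℝ := fun t => ((if t ^ 2 + σ < b2 then
        Gin2 b2 ρ0 ρ1 (t ^ 2 + σ) * (2 * t) ^ 2 + 2 * Gin1 b2 ρ0 ρ1 (t ^ 2 + σ) else 0) * γ t
      - Gf b2 ρ0 ρ1 (t ^ 2 + σ) * γ2 t) with hh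
  rcases lt_or_gt_of_ne hσ with hlt | hgt
  swap
  · have hz : ∀ t, h t = 0 := by
      intro t
      have h1 : ¬(t ^ 2 + σ < b2) := by nlinarith [sq_nonneg t]
      rw [hh]
      simp only [if_neg h1, Gf_eq_zero (by nlinarith [sq_nonneg t] : b2 ≤ t ^ 2 + σ)]
      ring
    rw [show h = fun _ => (0:ℝ) from funext hz, integral_zero]
  -- main case : σ < b2
  set τ := Real.sqrt (b2 - σ) with hτ
  have hτpos : 0 < τ := Real.sqrt_pos.2 (by linarith)
  have hττ : τ ^ 2 = b2 - σ := Real.sq_sqrt (by linarith)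
  have hsupp : ∀ t, t ∉ Ioc (-τ) τ → h t = 0 := by
    intro t ht
    have htt : τ ^ 2 ≤ t ^ 2 := by
      rcases not_and_or.1 ht with h1 | h2
      · push_neg at h1; nlinarith
      · push_neg at h2; nlinarith
    have h1 : ¬(t ^ 2 + σ < b2) := by nlinarith
    rw [hh]
    simp only [if_neg h1, Gf_eq_zero (by nlinarith : b2 ≤ t ^ 2 + σ)]
    ring
  have hind : h = Set.indicator (Ioc (-τ) τ) h := by
    funext t
    by_cases ht : t ∈ Ioc (-τ) τ
    · rw [Set.indicator_of_mem ht]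
    · rw [Set.indicator_of_notMem ht, hsupp t ht]
  rw [hind, integral_indicator measurableSet_Ioc,
    ← intervalIntegral.integral_of_le (by linarith : -τ ≤ τ)]
  -- FTC
  set ψ : ℝ → ℝ := fun t => Gf b2 ρ0 ρ1 (t ^ 2 + σ) with hψdef
  set ψ' : ℝ → ℝ := fun t => Gd b2 ρ0 ρ1 (t ^ 2 + σ) * (2 * t) with hψ'def
  set J : ℝ → ℝ := fun t => ψ t * γ1 t - ψ' t * γ t with hJ
  have hpar : ∀ t : ℝ, HasDerivAt (fun u : ℝ => u ^ 2 + σ) (2 * t) t := by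
    intro t
    exact hda_congr ((hasDerivAt_pow 2 t).add_const σ) (by push_cast; ring)
  have hψd : ∀ t, HasDerivAt ψ (ψ' t) t := fun t => (hasDerivAt_Gf b2 ρ0 ρ1 _).comp t (hpar t)
  have hJcont : Continuous J := by
    apply Continuous.sub
    · exact ((Gf_cont b2 ρ0 ρ1).comp (by fun_prop)).mul hγ1c
    · exact (((Gd_cont b2 ρ0 ρ1).comp (by fun_prop)).mul (by fun_prop)).mul hγc
  have hderiv : ∀ t ∈ Ioo (-τ) τ, HasDerivAt J (-h t) t := by
    intro t ht
    have hs : t ^ 2 + σ < b2 := by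
      obtain ⟨h1, h2⟩ := ht
      nlinarith
    have hopen : ∀ᶠ u in nhds t, u ^ 2 + σ < b2 := by
      have hct : Continuous fun u : ℝ => u ^ 2 + σ := by fun_prop
      exact (hct.continuousAt (x := t)).eventually_lt continuousAt_const hs
    have hev : ψ' =ᶠ[nhds t] fun u => Gin1 b2 ρ0 ρ1 (u ^ 2 + σ) * (2 * u) := by
      filter_upwards [hopen] with u hu
      rw [hψ'def]
      simp only
      rw [Gd_eq_of_le hu.le]
    have hmul : HasDerivAt (fun u : ℝ => 2 * u) 2 t := by
      simpa using (hasDerivAt_id t).const_mul 2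
    have hcomp : HasDerivAt (fun u : ℝ => Gin1 b2 ρ0 ρ1 (u ^ 2 + σ))
        (Gin2 b2 ρ0 ρ1 (t ^ 2 + σ) * (2 * t)) t :=
      by have := (hasDerivAt_Gin1 b2 ρ0 ρ1 (t ^ 2 + σ)).comp t (hpar t); exact this
    have hψ'' : HasDerivAt ψ' (Gin2 b2 ρ0 ρ1 (t ^ 2 + σ) * (2 * t) ^ 2
        + 2 * Gin1 b2 ρ0 ρ1 (t ^ 2 + σ)) t := by
      have h2 : HasDerivAt (fun u : ℝ => Gin1 b2 ρ0 ρ1 (u ^ 2 + σ) * (2 * u))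
          (Gin2 b2 ρ0 ρ1 (t ^ 2 + σ) * (2 * t) ^ 2 + 2 * Gin1 b2 ρ0 ρ1 (t ^ 2 + σ)) t :=
        hda_congr (hcomp.mul hmul) (by ring)
      exact h2.congr_of_eventuallyEq hev
    have key := ((hψd t).mul (hγ1 t)).sub (hψ''.mul (hγ t))
    have hval : -h t = ψ' t * γ1 t + ψ t * γ2 t
        - ((Gin2 b2 ρ0 ρ1 (t ^ 2 + σ) * (2 * t) ^ 2 + 2 * Gin1 b2 ρ0 ρ1 (t ^ 2 + σ)) * γ t
          + ψ' t * γ1 t) := by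
      rw [hh]
      simp only [if_pos hs, hψdef, hψ'def]
      ring
    rw [hval]
    exact key
  have hint : IntervalIntegrable (fun t => -h t) volume (-τ) τ := by
    apply IntervalIntegrable.neg
    rw [intervalIntegrable_iff_integrableOn_Ioc_of_le (by linarith : -τ ≤ τ)]
    set hc : ℝ → ℝ := fun t =>
      (Gin2 b2 ρ0 ρ1 (t ^ 2 + σ) * (2 * t) ^ 2 + 2 * Gin1 b2 ρ0 ρ1 (t ^ 2 + σ)) * γ t
        - Gf b2 ρ0 ρ1 (t ^ 2 + σ) * γ2 t with hhc
    have hccont : Continuous hc := by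
      apply Continuous.sub
      · exact ((((Gin2_cont b2 ρ0 ρ1).comp (by fun_prop)).mul (by fun_prop)).add
          ((continuous_const.mul ((Gin1_cont b2 ρ0 ρ1).comp (by fun_prop))))).mul hγc
      · exact ((Gf_cont b2 ρ0 ρ1).comp (by fun_prop)).mul hγ2c
    have h1 : IntegrableOn hc (Ioc (-τ) τ) := hccont.integrableOn_Ioc
    apply h1.congr
    have hne : ∀ᵐ t ∂(volume.restrict (Ioc (-τ) τ)), t ≠ τ := by
      apply ae_restrict_of_ae
      rw [ae_iff]
      simp only [ne_eq, not_not, setOf_eq_eq_singleton]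
      exact Real.volume_singleton
    filter_upwards [ae_restrict_mem measurableSet_Ioc, hne] with t ht htne
    have hlt' : t < τ := lt_of_le_of_ne ht.2 htne
    have hs : t ^ 2 + σ < b2 := by nlinarith [ht.1]
    rw [hh, hhc]
    simp only [if_pos hs]
  have hftc := intervalIntegral.integral_eq_sub_of_hasDerivAt_of_le (by linarith : -τ ≤ τ)
    hJcont.continuousOn hderiv hint
  have hJτ : J τ = 0 := by
    have h1 : τ ^ 2 + σ = b2 := by linarith
    rw [hJ]
    simp only [hψdef, hψ'def, h1, Gf_eq_zero le_rfl, Gd_eq_zero le_rfl]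
    ring
  have hJτ' : J (-τ) = 0 := by
    have h1 : (-τ) ^ 2 + σ = b2 := by rw [neg_pow]; simp; linarith
    rw [hJ]
    simp only [hψdef, hψ'def, h1, Gf_eq_zero le_rfl, Gd_eq_zero le_rfl]
    ring
  rw [hJτ, hJτ', intervalIntegral.integral_neg] at hftc
  linarith [hftc]

-- second directional derivative
def D2 {n : ℕ} (g : EuclideanSpace ℝ (Fin n) → ℝ) (i : Fin n)
    (ξ : EuclideanSpace ℝ (Fin n)) : ℝ :=
  fderiv ℝ (fun η => fderiv ℝ g η (EuclideanSpace.single i 1)) ξ (EuclideanSpace.single i 1)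

lemma sq_lt_sq_iff_of_nonneg {a b : ℝ} (ha : 0 ≤ a) (hb : 0 ≤ b) : a ^ 2 < b ^ 2 ↔ a < b := by
  constructor <;> intro h <;> nlinarith

section green
variable {n : ℕ} (b2 ρ0 ρ1 : ℝ) (g : EuclideanSpace ℝ (Fin (n+1)) → ℝ)

lemma green (hb2 : 0 < b2) (hg : ContDiff ℝ (⊤ : ℕ∞) g) :
    ∫ ξ : EuclideanSpace ℝ (Fin (n+1)),
      (if ‖ξ‖ ^ 2 < b2 then 4 * ‖ξ‖ ^ 2 * Gin2 b2 ρ0 ρ1 (‖ξ‖ ^ 2)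
          + 2 * ((n : ℝ) + 1) * Gin1 b2 ρ0 ρ1 (‖ξ‖ ^ 2) else 0) * g ξ
    = ∫ ξ : EuclideanSpace ℝ (Fin (n+1)),
        Gf b2 ρ0 ρ1 (‖ξ‖ ^ 2) * (∑ i, D2 g i ξ) := by
  have hgc : Continuous g := hg.continuous
  set b := Real.sqrt b2 with hbdef
  have hbpos : 0 < b := Real.sqrt_pos.2 hb2
  have hbb : b ^ 2 = b2 := Real.sq_sqrt hb2.le
  -- differentiability infrastructure
  have hD1 : ∀ i : Fin (n+1), ContDiff ℝ (⊤ : ℕ∞) (fun ξ : EuclideanSpace ℝ (Fin (n+1)) => fderiv ℝ g ξ (EuclideanSpace.single i 1)) :=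
    fun i => (hg.fderiv_right (by simp)).clm_apply contDiff_const
  have hD2c : ∀ i : Fin (n+1), Continuous (D2 g i) := by
    intro i
    have h2 : ContDiff ℝ (⊤ : ℕ∞) (D2 g i) :=
      ((hD1 i).fderiv_right (m := (⊤ : ℕ∞)) (by simp)).clm_apply contDiff_const
    exact h2.continuous
  -- the functions
  set W : EuclideanSpace ℝ (Fin (n+1)) → ℝ := fun ξ => Gf b2 ρ0 ρ1 (‖ξ‖ ^ 2) with hW
  set U : Fin (n+1) → EuclideanSpace ℝ (Fin (n+1)) → ℝ := fun i ξ => if ‖ξ‖ ^ 2 < b2 then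
      Gin2 b2 ρ0 ρ1 (‖ξ‖ ^ 2) * (2 * ξ i) ^ 2 + 2 * Gin1 b2 ρ0 ρ1 (‖ξ‖ ^ 2) else 0 with hU
  set H : Fin (n+1) → EuclideanSpace ℝ (Fin (n+1)) → ℝ := fun i ξ => U i ξ * g ξ - W ξ * D2 g i ξ with hH
  have hWcont : Continuous W := (Gf_cont b2 ρ0 ρ1).comp (by fun_prop)
  have hWz : ∀ ξ : EuclideanSpace ℝ (Fin (n+1)), ξ ∉ Metric.closedBall 0 b → W ξ = 0 := by
    intro ξ hξ
    rw [Metric.mem_closedBall, not_le, dist_zero_right] at hξ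
    exact Gf_eq_zero (by nlinarith [norm_nonneg ξ] : b2 ≤ ‖ξ‖ ^ 2)
  have hmemball : ∀ ξ : EuclideanSpace ℝ (Fin (n+1)), ξ ∈ Metric.ball 0 b ↔ ‖ξ‖ ^ 2 < b2 := by
    intro ξ
    rw [Metric.mem_ball, dist_zero_right, ← hbb]
    exact (sq_lt_sq_iff_of_nonneg (norm_nonneg ξ) hbpos.le).symm
  have hWD2int : ∀ i, Integrable (fun ξ => W ξ * D2 g i ξ) := by
    intro i
    apply (hWcont.mul (hD2c i)).integrable_of_hasCompactSupport
    apply HasCompactSupport.intro (isCompact_closedBall (0:EuclideanSpace ℝ (Fin (n+1))) b)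
    intro ξ hξ
    rw [Pi.mul_apply, hWz ξ hξ, zero_mul]
  have hUg_ind : ∀ i, (fun ξ => U i ξ * g ξ) = Set.indicator (Metric.ball (0:EuclideanSpace ℝ (Fin (n+1))) b)
      (fun ξ => (Gin2 b2 ρ0 ρ1 (‖ξ‖ ^ 2) * (2 * ξ i) ^ 2 + 2 * Gin1 b2 ρ0 ρ1 (‖ξ‖ ^ 2)) * g ξ) := by
    intro i
    funext ξ
    by_cases hξ : ξ ∈ Metric.ball (0:EuclideanSpace ℝ (Fin (n+1))) b
    · rw [Set.indicator_of_mem hξ, hU]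
      simp only [if_pos ((hmemball ξ).1 hξ)]
    · rw [Set.indicator_of_notMem hξ, hU]
      simp only [if_neg (fun hc => hξ ((hmemball ξ).2 hc)), zero_mul]
  have hcont_proj : ∀ i : Fin (n+1), Continuous (fun ξ : EuclideanSpace ℝ (Fin (n+1)) => ξ i) := by
    intro i
    exact (EuclideanSpace.proj (𝕜 := ℝ) (ι := Fin (n+1)) i).continuous
  have hUgc : ∀ i : Fin (n+1), Continuous (fun ξ : EuclideanSpace ℝ (Fin (n+1)) =>
      (Gin2 b2 ρ0 ρ1 (‖ξ‖ ^ 2) * (2 * ξ i) ^ 2 + 2 * Gin1 b2 ρ0 ρ1 (‖ξ‖ ^ 2)) * g ξ) := by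
    intro i
    have h1 : Continuous (fun ξ : EuclideanSpace ℝ (Fin (n+1)) => ‖ξ‖ ^ 2) := by fun_prop
    exact ((((Gin2_cont b2 ρ0 ρ1).comp h1).mul
      (((continuous_const.mul (hcont_proj i)).pow 2))).add
      (continuous_const.mul ((Gin1_cont b2 ρ0 ρ1).comp h1))).mul hgc
  have hUgint : ∀ i, Integrable (fun ξ => U i ξ * g ξ) := by
    intro i
    rw [hUg_ind i]
    rw [integrable_indicator_iff measurableSet_ball]
    exact ((hUgc i).continuousOn.integrableOn_compact (isCompact_closedBall (0:EuclideanSpace ℝ (Fin (n+1))) b)).mono_set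
      Metric.ball_subset_closedBall
  have hHint : ∀ i, Integrable (H i) := fun i => (hUgint i).sub (hWD2int i)
  -- per-coordinate integral vanishes
  have hzero : ∀ i, (∫ ξ, H i ξ) = 0 := by
    intro i
    set eE := (MeasurableEquiv.toLp 2 (Fin (n+1) → ℝ)).symm with heE
    set eP := MeasurableEquiv.piFinSuccAbove (fun _ : Fin (n+1) => ℝ) i with hePdef
    set Φ : (ℝ × (Fin n → ℝ)) ≃ᵐ EuclideanSpace ℝ (Fin (n+1)) := eP.symm.trans eE.symm with hΦdef
    have hmpΦ : MeasurePreserving Φ volume volume := by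
      have h1 : MeasurePreserving eE.symm volume volume :=
        (EuclideanSpace.volume_preserving_symm_measurableEquiv_toLp (Fin (n+1))).symm _
      have h2 : MeasurePreserving eP.symm volume volume :=
        (volume_preserving_piFinSuccAbove (fun _ : Fin (n+1) => ℝ) i).symm _
      exact h1.comp h2
    have hint2 : Integrable (fun p : ℝ × (Fin n → ℝ) => H i (Φ p)) volume :=
      (hmpΦ.integrable_comp_emb Φ.measurableEmbedding).2 (hHint i)
    have htrans : ∫ ξ, H i ξ = ∫ p : ℝ × (Fin n → ℝ), H i (Φ p) := (hmpΦ.integral_comp' (H i)).symm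
    rw [htrans]
    rw [Measure.volume_eq_prod] at hint2 ⊢
    rw [integral_prod_symm _ hint2]
    apply integral_eq_zero_of_ae
    have hae : ∀ᵐ y : (Fin n → ℝ) ∂volume, (∑ j, y j ^ 2) ≠ b2 := by
      rw [ae_iff]
      simp only [not_not]
      rcases Nat.eq_zero_or_pos n with hn | hn
      · subst hn
        have : {y : Fin 0 → ℝ | ∑ j, y j ^ 2 = b2} = (∅ : Set (Fin 0 → ℝ)) := by
          ext y
          simp [hb2.ne]
        rw [this]
        exact measure_empty
      · haveI hnt : Nontrivial (EuclideanSpace ℝ (Fin n)) := by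
          refine ⟨0, EuclideanSpace.single ⟨0, hn⟩ 1, fun h => ?_⟩
          have := congrArg norm h
          rw [norm_zero, EuclideanSpace.norm_single] at this
          norm_num at this
        have hpre : {y : Fin n → ℝ | ∑ j, y j ^ 2 = b2} =
            (MeasurableEquiv.toLp 2 (Fin n → ℝ)).symm.symm ⁻¹' (Metric.sphere 0 b) := by
          ext y
          set z := (MeasurableEquiv.toLp 2 (Fin n → ℝ)).symm.symm y with hz
          have hzy : ∀ j, z j = y j := fun j => rfl
          have hzn : ‖z‖ ^ 2 = ∑ j, y j ^ 2 := by
            rw [normsq_eq]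
            exact Finset.sum_congr rfl fun j _ => by rw [hzy j]
          simp only [Set.mem_setOf_eq, Set.mem_preimage, mem_sphere_iff_norm, sub_zero]
          constructor
          · intro h
            rw [← Real.sqrt_sq (norm_nonneg z), hzn, h, hbdef]
          · intro h
            rw [← hzn, h, hbb]
        rw [hpre, (EuclideanSpace.volume_preserving_symm_measurableEquiv_toLp (Fin n)).symm _
          |>.measure_preimage Metric.isClosed_sphere.measurableSet.nullMeasurableSet]
        exact Measure.addHaar_sphere (μ := (volume : Measure (EuclideanSpace ℝ (Fin n)))) 0 b
    filter_upwards [hae] with y hy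
    set σ := ∑ j, y j ^ 2 with hσdef
    set e : EuclideanSpace ℝ (Fin (n+1)) := EuclideanSpace.single i 1 with he
    set x0 : EuclideanSpace ℝ (Fin (n+1)) := Φ (0, y) with hx0
    have hco : ∀ (t : ℝ) (j : Fin (n+1)), Φ (t, y) j = Fin.insertNth (α := fun _ : Fin (n+1) => ℝ) i t y j := fun t j => rfl
    have hcoordi : ∀ t : ℝ, Φ (t, y) i = t := by
      intro t
      rw [hco t i, Fin.insertNth_apply_same]
    have hcoords : ∀ (t : ℝ) (k : Fin n), Φ (t, y) (i.succAbove k) = y k := by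
      intro t k
      rw [hco t _, Fin.insertNth_apply_succAbove]
    have hpt : ∀ t : ℝ, Φ (t, y) = x0 + t • e := by
      intro t
      apply PiLp.ext
      intro j
      have hR : (x0 + t • e) j = x0 j + t * e j := rfl
      rw [hR]
      refine Fin.succAboveCases i ?_ ?_ j
      · rw [hcoordi t, hx0, hcoordi 0, he]
        simp [EuclideanSpace.single_apply]
      · intro k
        rw [hcoords t k, hx0, hcoords 0 k, he]
        simp [EuclideanSpace.single_apply, (Fin.succAbove_ne i k)]
    have hnorm : ∀ t : ℝ, ‖Φ (t, y)‖ ^ 2 = t ^ 2 + σ := by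
      intro t
      rw [normsq_eq, Fin.sum_univ_succAbove (fun j => (Φ (t, y)) j ^ 2) i, hcoordi t]
      congr 1
      exact Finset.sum_congr rfl fun k _ => by rw [hcoords t k]
    set γ : ℝ → ℝ := fun t => g (x0 + t • e) with hγdef
    set γ1 : ℝ → ℝ := fun t => fderiv ℝ g (x0 + t • e) e with hγ1def
    set γ2 : ℝ → ℝ := fun t => D2 g i (x0 + t • e) with hγ2def
    have hline : ∀ t : ℝ, HasDerivAt (fun u : ℝ => x0 + u • e) e t := by
      intro t
      have h1 : HasDerivAt (fun u : ℝ => u • e) ((1:ℝ) • e) t := (hasDerivAt_id t).smul_const e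
      rw [one_smul] at h1
      exact h1.const_add x0
    have hγd : ∀ t, HasDerivAt γ (γ1 t) t := by
      intro t
      have h1 := ((hg.differentiable (by simp)) (x0 + t • e)).hasFDerivAt.comp_hasDerivAt t (hline t)
      exact h1
    have hγ1d : ∀ t, HasDerivAt γ1 (γ2 t) t := by
      intro t
      have h1 := (((hD1 i).differentiable (by simp)) (x0 + t • e)).hasFDerivAt.comp_hasDerivAt
        t (hline t)
      exact h1
    have hγ2c : Continuous γ2 := (hD2c i).comp (by fun_prop : Continuous fun t : ℝ => x0 + t • e)
    have hfun : (fun t : ℝ => H i (Φ (t, y))) = fun t : ℝ =>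
        ((if t ^ 2 + σ < b2 then
            Gin2 b2 ρ0 ρ1 (t ^ 2 + σ) * (2 * t) ^ 2 + 2 * Gin1 b2 ρ0 ρ1 (t ^ 2 + σ) else 0) * γ t
          - Gf b2 ρ0 ρ1 (t ^ 2 + σ) * γ2 t) := by
      funext t
      simp only [hH, hU, hW]
      rw [hnorm t, hcoordi t, hpt t]
    rw [hfun]
    exact line_zero b2 ρ0 ρ1 σ hy γ γ1 γ2 hγd hγ1d hγ2c
  -- summation
  have hUsum : ∀ ξ : EuclideanSpace ℝ (Fin (n+1)),
      (if ‖ξ‖ ^ 2 < b2 then 4 * ‖ξ‖ ^ 2 * Gin2 b2 ρ0 ρ1 (‖ξ‖ ^ 2)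
          + 2 * ((n : ℝ) + 1) * Gin1 b2 ρ0 ρ1 (‖ξ‖ ^ 2) else 0) * g ξ
        = ∑ i, U i ξ * g ξ := by
    intro ξ
    by_cases hc : ‖ξ‖ ^ 2 < b2
    · simp only [hU, if_pos hc]
      rw [← Finset.sum_mul]
      congr 1
      rw [Finset.sum_add_distrib, Finset.sum_const, Finset.card_univ, Fintype.card_fin,
        nsmul_eq_mul]
      have h1 : ∑ i, Gin2 b2 ρ0 ρ1 (‖ξ‖ ^ 2) * (2 * ξ i) ^ 2
          = 4 * ‖ξ‖ ^ 2 * Gin2 b2 ρ0 ρ1 (‖ξ‖ ^ 2) := by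
        have h2 : ∀ i : Fin (n+1), Gin2 b2 ρ0 ρ1 (‖ξ‖ ^ 2) * (2 * ξ i) ^ 2
            = (4 * Gin2 b2 ρ0 ρ1 (‖ξ‖ ^ 2)) * ξ i ^ 2 := fun i => by ring
        rw [Finset.sum_congr rfl fun i _ => h2 i, ← Finset.mul_sum, ← normsq_eq]
        ring
      rw [h1]
      push_cast
      ring
    · simp only [hU, if_neg hc]
      simp
  have hWlap : ∀ ξ : EuclideanSpace ℝ (Fin (n+1)),
      Gf b2 ρ0 ρ1 (‖ξ‖ ^ 2) * (∑ i, D2 g i ξ) = ∑ i, W ξ * D2 g i ξ := by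
    intro ξ
    rw [Finset.mul_sum]
  have heach : ∀ i : Fin (n+1), (∫ ξ, U i ξ * g ξ) = ∫ ξ, W ξ * D2 g i ξ := by
    intro i
    have h1 := hzero i
    rw [hH] at h1
    rw [integral_sub (hUgint i) (hWD2int i)] at h1
    linarith
  calc ∫ ξ : EuclideanSpace ℝ (Fin (n+1)),
      (if ‖ξ‖ ^ 2 < b2 then 4 * ‖ξ‖ ^ 2 * Gin2 b2 ρ0 ρ1 (‖ξ‖ ^ 2)
          + 2 * ((n : ℝ) + 1) * Gin1 b2 ρ0 ρ1 (‖ξ‖ ^ 2) else 0) * g ξ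
      = ∫ ξ, ∑ i, U i ξ * g ξ := by
        apply integral_congr_ae
        exact Filter.EventuallyEq.of_eq (funext hUsum)
    _ = ∑ i, ∫ ξ, U i ξ * g ξ := integral_finset_sum Finset.univ fun i _ => hUgint i
    _ = ∑ i, ∫ ξ, W ξ * D2 g i ξ := Finset.sum_congr rfl fun i _ => heach i
    _ = ∫ ξ, ∑ i, W ξ * D2 g i ξ := (integral_finset_sum Finset.univ fun i _ => hWD2int i).symm
    _ = ∫ ξ, Gf b2 ρ0 ρ1 (‖ξ‖ ^ 2) * (∑ i, D2 g i ξ) := by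
        apply integral_congr_ae
        exact Filter.EventuallyEq.of_eq (funext fun ξ => (hWlap ξ).symm)


end green
set_option maxHeartbeats 2000000 in
lemma core (m : ℕ) (hm : 1 ≤ m) (f : ℝ) (hf : 0 < f)
    (α ε : ℝ) (hα : 0 ≤ α) (hαε : α < ε) (hε : ε ≤ π / 6)
    (g : ESp m → ℝ) (hsm : ContDiff ℝ (⊤ : ℕ∞) g) (hg0 : ∀ ξ, 0 ≤ g ξ) :
    (∫ ξ in Metric.ball (0 : ESp m) (Real.sqrt (2 * f * (ε - α))),
        Real.sin (‖ξ‖ ^ 2 / (2 * f) + α) ^ 2 * g ξ)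
      ≥ (9 / π ^ 2) *
        ((((m : ℝ) / (m + 4)) * (ε - α) ^ 2 + (2 * m / (m + 2)) * α * (ε - α) + α ^ 2) *
            (∫ ξ in Metric.ball (0 : ESp m) (Real.sqrt (2 * f * (ε - α))), g ξ)
          + f * ((2 / (3 * ((m : ℝ) + 4))) * (ε - α) ^ 3 + (1 / ((m : ℝ) + 2)) * α * (ε - α) ^ 2) *
            (∫ ξ in {ζ ∈ Metric.ball (0 : ESp m) (Real.sqrt (2 * f * (ε - α))) |
                lap m g ζ ≤ 0}, lap m g ξ)) := by
  obtain ⟨n, rfl⟩ : ∃ n, m = n + 1 := ⟨m - 1, by omega⟩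
  have hπ := Real.pi_pos
  have hcast : ((n + 1 : ℕ) : ℝ) = (n : ℝ) + 1 := by push_cast; ring
  rw [hcast]
  set mr : ℝ := (n : ℝ) + 1 with hmrdef
  have hmr : 0 < mr := by rw [hmrdef]; positivity
  set c : ℝ := ε - α with hcdef
  have hc : 0 < c := by rw [hcdef]; linarith
  set b2 : ℝ := 2 * f * c with hb2def
  have hb2 : 0 < b2 := by rw [hb2def]; positivity
  set b : ℝ := Real.sqrt b2 with hbdef
  have hbpos : 0 < b := Real.sqrt_pos.2 hb2
  have hbb : b ^ 2 = b2 := Real.sq_sqrt hb2.le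
  set ρ0 : ℝ := c ^ 2 / (3 * b2 * (mr + 4)) + α * c / (2 * b2 * (mr + 2)) with hρ0def
  set ρ1 : ℝ := c ^ 2 / (6 * b2 ^ 2 * (mr + 4)) with hρ1def
  have hρ0 : 0 ≤ ρ0 := by rw [hρ0def]; positivity
  have hρ1 : 0 ≤ ρ1 := by rw [hρ1def]; positivity
  set A : ℝ := mr / (mr + 4) * c ^ 2 + 2 * mr / (mr + 2) * α * c + α ^ 2 with hAdef
  set P0 : ℝ := b2 ^ 2 * ρ0 with hP0def
  have hm4 : (0:ℝ) < mr + 4 := by linarith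
  have hm2 : (0:ℝ) < mr + 2 := by linarith
  -- the two algebraic identities
  have hQQ : ∀ s : ℝ, 4 * s * Gin2 b2 ρ0 ρ1 s + 2 * ((n : ℝ) + 1) * Gin1 b2 ρ0 ρ1 s
      = (s / (2 * f) + α) ^ 2 - A := by
    intro s
    rw [Gin1, Gin2]
    rw [hAdef, hρ0def, hρ1def, hb2def, ← hmrdef]
    field_simp
    ring
  have hP0 : P0 = f * (2 / (3 * (mr + 4)) * c ^ 3 + 1 / (mr + 2) * α * c ^ 2) := by
    rw [hP0def, hρ0def, hb2def]
    field_simp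
  have hP0nn : 0 ≤ P0 := by rw [hP0def]; positivity
  -- bounds on Gf
  have hGf0 : ∀ s : ℝ, 0 ≤ s → 0 ≤ Gf b2 ρ0 ρ1 s := by
    intro s hs
    rcases le_or_gt s b2 with h | h
    · rw [Gf_eq_of_le h]
      have : 0 ≤ ρ0 + ρ1 * s := by positivity
      positivity
    · rw [Gf_eq_zero h.le]
  have hd : ρ0 - ρ1 * b2 = c ^ 2 / (6 * b2 * (mr + 4)) + α * c / (2 * b2 * (mr + 2)) := by
    rw [hρ0def, hρ1def]
    field_simp
    ring
  clear_value mr c b2 b ρ0 ρ1 A P0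
  have hkey : ρ1 * b2 ≤ ρ0 := by
    have hden1 : (0:ℝ) < 6 * b2 * (mr + 4) := by
      apply mul_pos (mul_pos (by norm_num) hb2) hm4
    have hden2 : (0:ℝ) < 2 * b2 * (mr + 2) := by
      apply mul_pos (mul_pos (by norm_num) hb2) hm2
    have hx1 : 0 ≤ c ^ 2 / (6 * b2 * (mr + 4)) := div_nonneg (sq_nonneg c) hden1.le
    have hx2 : 0 ≤ α * c / (2 * b2 * (mr + 2)) :=
      div_nonneg (mul_nonneg hα hc.le) hden2.le
    linarith [hd]
  have hGfP0 : ∀ s : ℝ, 0 ≤ s → Gf b2 ρ0 ρ1 s ≤ P0 := by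
    intro s hs
    rcases le_or_gt s b2 with h | h
    · rw [Gf_eq_of_le h, hP0def]
      have e2 : ρ0 * b2 ≤ ρ0 * (2 * b2 - s) := by nlinarith
      have e3 : ρ1 * (b2 - s) ^ 2 ≤ ρ1 * b2 ^ 2 := by
        nlinarith [mul_nonneg hρ1 (mul_nonneg hs (by linarith : (0:ℝ) ≤ 2 * b2 - s))]
      have e4 : 0 ≤ ρ0 * b2 - ρ1 * b2 ^ 2 := by nlinarith
      nlinarith [mul_nonneg hs (by linarith : (0:ℝ) ≤ ρ0 * (2 * b2 - s) - ρ1 * (b2 - s) ^ 2)]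
    · rw [Gf_eq_zero h.le, hP0def]
      positivity
  -- continuity infrastructure
  have hgc : Continuous g := hsm.continuous
  have hD1 : ∀ i : Fin (n+1), ContDiff ℝ (⊤ : ℕ∞)
      (fun ξ : EuclideanSpace ℝ (Fin (n+1)) => fderiv ℝ g ξ (EuclideanSpace.single i 1)) :=
    fun i => (hsm.fderiv_right (by simp)).clm_apply contDiff_const
  have hD2c : ∀ i : Fin (n+1), Continuous (D2 g i) := by
    intro i
    have h2 : ContDiff ℝ (⊤ : ℕ∞) (D2 g i) :=
      ((hD1 i).fderiv_right (m := (⊤ : ℕ∞)) (by simp)).clm_apply contDiff_const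
    exact h2.continuous
  have hlapeq : lap (n+1) g = fun ξ => ∑ i, D2 g i ξ := rfl
  have hlapc : Continuous (lap (n+1) g) := by
    rw [hlapeq]
    exact continuous_finset_sum _ fun i _ => hD2c i
  have hmemball : ∀ ξ : ESp (n+1), ξ ∈ Metric.ball (0 : ESp (n+1)) b ↔ ‖ξ‖ ^ 2 < b2 := by
    intro ξ
    rw [Metric.mem_ball, dist_zero_right, ← hbb]
    exact (sq_lt_sq_iff_of_nonneg (norm_nonneg ξ) hbpos.le).symm
  have hnotball : ∀ ξ : ESp (n+1), ξ ∉ Metric.ball (0 : ESp (n+1)) b → b2 ≤ ‖ξ‖ ^ 2 := by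
    intro ξ hξ
    have := (hmemball ξ).2
    by_contra hcon
    push_neg at hcon
    exact hξ (this hcon)
  -- integrability on the ball
  have hIball : ∀ F : ESp (n+1) → ℝ, Continuous F →
      IntegrableOn F (Metric.ball (0 : ESp (n+1)) b) volume := fun F hF =>
    (hF.continuousOn.integrableOn_compact (isCompact_closedBall _ _)).mono_set
      Metric.ball_subset_closedBall
  -- Green's identity specialised
  have hgreen := green b2 ρ0 ρ1 g hb2 hsm
  -- convert LHS of green to a ball integral
  have hindL : (fun ξ : EuclideanSpace ℝ (Fin (n+1)) =>
      (if ‖ξ‖ ^ 2 < b2 then 4 * ‖ξ‖ ^ 2 * Gin2 b2 ρ0 ρ1 (‖ξ‖ ^ 2)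
          + 2 * ((n : ℝ) + 1) * Gin1 b2 ρ0 ρ1 (‖ξ‖ ^ 2) else 0) * g ξ)
      = Set.indicator (Metric.ball (0 : ESp (n+1)) b)
          (fun ξ => ((‖ξ‖ ^ 2 / (2 * f) + α) ^ 2 - A) * g ξ) := by
    funext ξ
    by_cases hξ : ξ ∈ Metric.ball (0 : ESp (n+1)) b
    · rw [Set.indicator_of_mem hξ, if_pos ((hmemball ξ).1 hξ), hQQ (‖ξ‖ ^ 2)]
    · rw [Set.indicator_of_notMem hξ,
        if_neg (fun hcon => hξ ((hmemball ξ).2 hcon)), zero_mul]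
  have hgreen2 : (∫ ξ in Metric.ball (0 : ESp (n+1)) b, ((‖ξ‖ ^ 2 / (2 * f) + α) ^ 2 - A) * g ξ)
      = ∫ ξ : EuclideanSpace ℝ (Fin (n+1)), Gf b2 ρ0 ρ1 (‖ξ‖ ^ 2) * lap (n+1) g ξ := by
    rw [← integral_indicator measurableSet_ball, ← hindL, hgreen]
    rfl
  -- estimate the RHS of green from below
  set Bm : Set (ESp (n+1)) := {ζ ∈ Metric.ball (0 : ESp (n+1)) b | lap (n+1) g ζ ≤ 0} with hBmdef
  have hBmmeas : MeasurableSet Bm :=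
    measurableSet_ball.inter ((isClosed_le hlapc continuous_const).measurableSet)
  have hBmsub : Bm ⊆ Metric.ball (0 : ESp (n+1)) b := fun ζ hζ => hζ.1
  have hWΛint : Integrable (fun ξ : ESp (n+1) => Gf b2 ρ0 ρ1 (‖ξ‖ ^ 2) * lap (n+1) g ξ) := by
    apply Continuous.integrable_of_hasCompactSupport
    · exact ((Gf_cont b2 ρ0 ρ1).comp (by fun_prop)).mul hlapc
    · apply HasCompactSupport.intro (isCompact_closedBall (0 : ESp (n+1)) b)
      intro ξ hξ
      rw [Metric.mem_closedBall, not_le, dist_zero_right] at hξ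
      rw [Gf_eq_zero (by nlinarith [norm_nonneg ξ] : b2 ≤ ‖ξ‖ ^ 2), zero_mul]
  have hWΛball : (∫ ξ : EuclideanSpace ℝ (Fin (n+1)), Gf b2 ρ0 ρ1 (‖ξ‖ ^ 2) * lap (n+1) g ξ)
      = ∫ ξ in Metric.ball (0 : ESp (n+1)) b, Gf b2 ρ0 ρ1 (‖ξ‖ ^ 2) * lap (n+1) g ξ := by
    rw [← integral_indicator measurableSet_ball]
    congr 1
    funext ξ
    by_cases hξ : ξ ∈ Metric.ball (0 : ESp (n+1)) b
    · rw [Set.indicator_of_mem hξ]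
    · rw [Set.indicator_of_notMem hξ, Gf_eq_zero (hnotball ξ hξ), zero_mul]
  have hdiff := integral_diff hBmmeas (hWΛint.integrableOn) hBmsub
    (f := fun ξ : ESp (n+1) => Gf b2 ρ0 ρ1 (‖ξ‖ ^ 2) * lap (n+1) g ξ) (μ := volume)
  have hpos : 0 ≤ ∫ ξ in (Metric.ball (0 : ESp (n+1)) b \ Bm),
      Gf b2 ρ0 ρ1 (‖ξ‖ ^ 2) * lap (n+1) g ξ := by
    apply setIntegral_nonneg (measurableSet_ball.diff hBmmeas)
    intro ξ hξ
    have h1 : ¬ (lap (n+1) g ξ ≤ 0) := fun hcon => hξ.2 ⟨hξ.1, hcon⟩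
    push_neg at h1
    exact mul_nonneg (hGf0 _ (by positivity)) h1.le
  have hBmlow : P0 * (∫ ξ in Bm, lap (n+1) g ξ)
      ≤ ∫ ξ in Bm, Gf b2 ρ0 ρ1 (‖ξ‖ ^ 2) * lap (n+1) g ξ := by
    rw [← integral_const_mul]
    apply setIntegral_mono_on
    · exact ((continuous_const.mul hlapc).continuousOn.integrableOn_compact
        (isCompact_closedBall _ _)).mono_set (hBmsub.trans Metric.ball_subset_closedBall)
    · exact hWΛint.integrableOn
    · exact hBmmeas
    · intro ξ hξ
      have h1 : lap (n+1) g ξ ≤ 0 := hξ.2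
      have h2 : Gf b2 ρ0 ρ1 (‖ξ‖ ^ 2) ≤ P0 := hGfP0 _ (by positivity)
      exact mul_le_mul_of_nonpos_right h2 h1
  have hmain : P0 * (∫ ξ in Bm, lap (n+1) g ξ)
      ≤ ∫ ξ in Metric.ball (0 : ESp (n+1)) b, ((‖ξ‖ ^ 2 / (2 * f) + α) ^ 2 - A) * g ξ := by
    rw [hgreen2, hWΛball]
    linarith [hdiff, hpos, hBmlow]
  -- the sine lower bound, pointwise on the ball
  have hcontt : Continuous (fun ξ : ESp (n+1) => ‖ξ‖ ^ 2 / (2 * f) + α) := by fun_prop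
  have hsinpt : ∀ ξ ∈ Metric.ball (0 : ESp (n+1)) b,
      9 / π ^ 2 * ((‖ξ‖ ^ 2 / (2 * f) + α) ^ 2 * g ξ)
        ≤ Real.sin (‖ξ‖ ^ 2 / (2 * f) + α) ^ 2 * g ξ := by
    intro ξ hξ
    have h1 : 0 ≤ ‖ξ‖ ^ 2 / (2 * f) + α := by positivity
    have h2 : ‖ξ‖ ^ 2 / (2 * f) + α ≤ π / 6 := by
      have h3 : ‖ξ‖ ^ 2 < b2 := (hmemball ξ).1 hξ
      rw [hb2def] at h3
      have h4 : ‖ξ‖ ^ 2 / (2 * f) < c := by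
        rw [div_lt_iff₀ (by positivity)]
        linarith
      rw [hcdef] at h4
      linarith
    have h6 := sin_sq_lb h1 h2
    have h5 := hg0 ξ
    nlinarith
  have hIsin : (9 / π ^ 2) *
      (∫ ξ in Metric.ball (0 : ESp (n+1)) b, (‖ξ‖ ^ 2 / (2 * f) + α) ^ 2 * g ξ)
      ≤ ∫ ξ in Metric.ball (0 : ESp (n+1)) b, Real.sin (‖ξ‖ ^ 2 / (2 * f) + α) ^ 2 * g ξ := by
    rw [← integral_const_mul]
    apply setIntegral_mono_on
    · exact hIball _ (continuous_const.mul ((hcontt.pow 2).mul hgc))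
    · exact hIball _ (((Real.continuous_sin.comp hcontt).pow 2).mul hgc)
    · exact measurableSet_ball
    · exact hsinpt
  have hsplit2 : (∫ ξ in Metric.ball (0 : ESp (n+1)) b, (‖ξ‖ ^ 2 / (2 * f) + α) ^ 2 * g ξ)
      = (∫ ξ in Metric.ball (0 : ESp (n+1)) b, ((‖ξ‖ ^ 2 / (2 * f) + α) ^ 2 - A) * g ξ)
        + A * ∫ ξ in Metric.ball (0 : ESp (n+1)) b, g ξ := by
    rw [← integral_const_mul, ← integral_add
      (hIball (fun ξ => ((‖ξ‖ ^ 2 / (2 * f) + α) ^ 2 - A) * g ξ) ((((hcontt.pow 2)).sub continuous_const).mul hgc))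
      (hIball (fun ξ => A * g ξ) (continuous_const.mul hgc))]
    apply integral_congr_ae
    apply Filter.EventuallyEq.of_eq
    funext ξ
    ring
  -- finish
  rw [ge_iff_le, show f * (2 / (3 * (mr + 4)) * c ^ 3 + 1 / (mr + 2) * α * c ^ 2) = P0
    from hP0.symm]
  have hfrac : (0:ℝ) ≤ 9 / π ^ 2 := by positivity
  have e4 : 9 / π ^ 2 * (A *
        (∫ ξ in Metric.ball (0 : ESp (n+1)) b, g ξ) + P0 * (∫ ξ in Bm, lap (n+1) g ξ))
      ≤ 9 / π ^ 2 *
        (∫ ξ in Metric.ball (0 : ESp (n+1)) b, (‖ξ‖ ^ 2 / (2 * f) + α) ^ 2 * g ξ) := by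
    apply mul_le_mul_of_nonneg_left _ hfrac
    rw [hsplit2]
    linarith [hmain]
  calc 9 / π ^ 2 * (A *
        (∫ ξ in Metric.ball (0 : ESp (n+1)) b, g ξ) + P0 * (∫ ξ in Bm, lap (n+1) g ξ))
      ≤ 9 / π ^ 2 *
        (∫ ξ in Metric.ball (0 : ESp (n+1)) b, (‖ξ‖ ^ 2 / (2 * f) + α) ^ 2 * g ξ) := e4
    _ ≤ ∫ ξ in Metric.ball (0 : ESp (n+1)) b, Real.sin (‖ξ‖ ^ 2 / (2 * f) + α) ^ 2 * g ξ :=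
        hIsin


end S11

/-- **stability estimate at the central CTF minimum, Lemma 4.3.**
Let `0 ≤ α < ε ≤ π/6`, `C₀ = 9/π²`, `b₀ = (2f(ε−α))^{1/2}`, `B₀ = {|ξ| < b₀}`.  Let
`φ ∈ L²(ℝ^m)` be compactly supported with smooth Fourier transform represented by `φh`,
and `B₀⁻ = {ξ ∈ B₀ : Δ|φ̂|²(ξ) ≤ 0}`.  Then
`∫_{B₀} s_α² |φ̂|² ≥ C₀[((m/(m+4))(ε−α)² + (2m/(m+2))α(ε−α) + α²)∫_{B₀}|φ̂|²
  + f((2/(3(m+4)))(ε−α)³ + (1/(m+2))α(ε−α)²)∫_{B₀⁻} Δ|φ̂|²]`. -/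
theorem statement11 (m : ℕ) (hm : 1 ≤ m) (f : ℝ) (hf : 0 < f)
    (α ε : ℝ) (hα : 0 ≤ α) (hαε : α < ε) (hε : ε ≤ π / 6)
    (F : L2S m ≃ₗᵢ[ℂ] L2S m) (hF : IsFourierTransform m F)
    (φ : L2S m) (R : ℝ)
    (hsupp : ∀ᵐ x ∂(volume : Measure (ESp m)),
      x ∉ Metric.closedBall (0 : ESp m) R → (φ : ESp m → ℂ) x = 0)
    (φh : ESp m → ℂ) (hsmooth : ContDiff ℝ (⊤ : ℕ∞) φh)
    (hrep : (F φ : ESp m → ℂ) =ᵐ[volume] φh) :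
    (∫ ξ in Metric.ball (0 : ESp m) (Real.sqrt (2 * f * (ε - α))),
        Real.sin (‖ξ‖ ^ 2 / (2 * f) + α) ^ 2 * ‖φh ξ‖ ^ 2)
      ≥ (9 / π ^ 2) *
        ((((m : ℝ) / (m + 4)) * (ε - α) ^ 2 + (2 * m / (m + 2)) * α * (ε - α) + α ^ 2) *
            (∫ ξ in Metric.ball (0 : ESp m) (Real.sqrt (2 * f * (ε - α))), ‖φh ξ‖ ^ 2)
          + f * ((2 / (3 * ((m : ℝ) + 4))) * (ε - α) ^ 3 + (1 / ((m : ℝ) + 2)) * α * (ε - α) ^ 2) *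
            (∫ ξ in {ζ ∈ Metric.ball (0 : ESp m) (Real.sqrt (2 * f * (ε - α))) |
                lap m (fun η => ‖φh η‖ ^ 2) ζ ≤ 0},
              lap m (fun η => ‖φh η‖ ^ 2) ξ)) := by
  have hkey : ∀ z : ℂ, ‖z‖ ^ 2 = z.re * z.re + z.im * z.im := fun z => by
    rw [Complex.sq_norm, Complex.normSq_apply]
  have h1 : ContDiff ℝ (⊤ : ℕ∞) fun η : ESp m => (φh η).re := Complex.reCLM.contDiff.comp hsmooth
  have h2 : ContDiff ℝ (⊤ : ℕ∞) fun η : ESp m => (φh η).im := Complex.imCLM.contDiff.comp hsmooth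
  have hgC : ContDiff ℝ (⊤ : ℕ∞) (fun η : ESp m => ‖φh η‖ ^ 2) := by
    have heq : (fun η : ESp m => ‖φh η‖ ^ 2)
        = fun η => (φh η).re * (φh η).re + (φh η).im * (φh η).im :=
      funext fun η => hkey (φh η)
    rw [heq]
    exact (h1.mul h1).add (h2.mul h2)
  have hg0 : ∀ ξ : ESp m, 0 ≤ ‖φh ξ‖ ^ 2 := fun ξ => by positivity
  exact S11.core m hm f hf α ε hα hαε hε (fun η => ‖φh η‖ ^ 2) hgC hg0
end
end

section
/- Order optimality of the stability bound for non-absorbing objects (Theorem 4.5): let m ≥ 1 and Ω := {x ∈ ℝ^m : |x| ≤ 1/2}, and for f > 0 define C_IP2(Ω, f, 0) := inf{ ‖S₀ φ‖ : φ ∈ L²_Ω real-valued, ‖φ‖ = 1 }, where S₀ is the operator S_α at α = 0 and Fresnel number f. If c₁′, c₂′, ν > 0 are constants such that C_IP2(Ω, f, 0) ≥ min{ c₁′, c₂′·f^{-ν} } for all f > 0, then ν ≥ 1. -/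
open MeasureTheory Complex Real Filter
open scoped ENNReal InnerProductSpace

noncomputable section

open scoped FourierTransform

private lemma myToSchwartz {E : Type*} [NormedAddCommGroup E] [InnerProductSpace ℝ E]
    [FiniteDimensional ℝ E] {h : E → ℂ}
    (hsm : ContDiff ℝ ((⊤ : ℕ∞) : WithTop ℕ∞) h) (hsupp : HasCompactSupport h) :
    ∃ H : SchwartzMap E ℂ, ⇑H = h := by
  refine ⟨⟨h, hsm, fun k n => ?_⟩, rfl⟩
  set g : E → ℝ := fun x => ‖x‖ ^ k * ‖iteratedFDeriv ℝ n h x‖ with hg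
  have hgc : Continuous g :=
    (continuous_norm.pow k).mul (hsm.continuous_iteratedFDeriv (by exact_mod_cast le_top)).norm
  have hgs : HasCompactSupport g :=
    HasCompactSupport.mul_left ((hsupp.iteratedFDeriv n).norm)
  obtain ⟨x₀, hx₀⟩ := hgc.exists_forall_ge_of_hasCompactSupport hgs
  exact ⟨g x₀, hx₀⟩

private lemma myFourierEq {m : ℕ} (h : ESp m → ℂ) (ξ : ESp m) :
    (∫ x, h x * Complex.exp (-Complex.I * (⟪ξ, x⟫_ℝ : ℝ)))
      = 𝓕 h ((2 * π)⁻¹ • ξ) := by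
  rw [Real.fourier_eq']
  congr 1 with x
  rw [smul_eq_mul, real_inner_smul_right, mul_comm]
  have h2π : (2 * π) ≠ 0 := by positivity
  have hre : -2 * π * ((2 * π)⁻¹ * ⟪x, ξ⟫_ℝ) = -⟪ξ, x⟫_ℝ := by
    rw [real_inner_comm]; field_simp
  rw [hre]
  congr 1
  push_cast
  ring

set_option maxHeartbeats 2000000

/-- **order optimality of the stability bound, Theorem 4.5.**
Let `Ω = {|x| ≤ 1/2}` and let `S f` be the non-absorbing-object forward operator
`S₀ φ = 2F⁻¹(sin(|ξ|²/(2f))·F(φ))`.  If `c₁', c₂', ν > 0` are such that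
`C_IP2(Ω,f,0) = inf{‖S₀φ‖ : φ ∈ L²_Ω real-valued, ‖φ‖=1} ≥ min{c₁', c₂' f^{-ν}}`
for all `f > 0`, then `ν ≥ 1`. -/
theorem statement14 (m : ℕ) (hm : 1 ≤ m)
    (F : L2S m ≃ₗᵢ[ℂ] L2S m) (hF : IsFourierTransform m F)
    (S : ℝ → L2S m → L2S m)
    (hS : ∀ f : ℝ, 0 < f → ∀ u : L2S m,
      (F (S f u) : ESp m → ℂ) =ᵐ[volume]
        fun ξ => ((2 * Real.sin (‖ξ‖ ^ 2 / (2 * f)) : ℝ) : ℂ) * (F u : ESp m → ℂ) ξ)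
    (c₁' c₂' ν : ℝ) (hc₁ : 0 < c₁') (hc₂ : 0 < c₂') (hν : 0 < ν)
    (hbound : ∀ f : ℝ, 0 < f →
      sInf {r : ℝ | ∃ φ : L2S m,
          (∀ᵐ x ∂(volume : Measure (ESp m)),
            x ∉ Metric.closedBall (0 : ESp m) (1/2) → (φ : ESp m → ℂ) x = 0) ∧
          (∀ᵐ x ∂(volume : Measure (ESp m)), ((φ : ESp m → ℂ) x).im = 0) ∧
          ‖φ‖ = 1 ∧ r = ‖S f φ‖}
        ≥ min c₁' (c₂' * f ^ (-ν))) :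
    1 ≤ ν := by
  classical
  -- the bump function
  let b : ContDiffBump (0 : ESp m) := ⟨1/4, 1/2, by norm_num, by norm_num⟩
  let h : ESp m → ℂ := fun x => ((b x : ℝ) : ℂ)
  have hsm : ContDiff ℝ ((⊤ : ℕ∞) : WithTop ℕ∞) h :=
    Complex.ofRealCLM.contDiff.comp b.contDiff
  have hsupp : HasCompactSupport h :=
    b.hasCompactSupport.comp_left (g := fun r : ℝ => (r : ℂ)) (by simp)
  have hcont : Continuous h := hsm.continuous
  have hint : Integrable h := hcont.integrable_of_hasCompactSupport hsupp
  have hmem : MemLp h 2 (volume : Measure (ESp m)) :=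
    hcont.memLp_of_hasCompactSupport hsupp
  set φ₀ : L2S m := hmem.toLp h with hφ₀
  have hφ₀coe : ⇑φ₀ =ᵐ[volume] h := hmem.coeFn_toLp
  have hφ₀ne : φ₀ ≠ 0 := by
    intro h0
    have hae : h =ᵐ[volume] (fun _ => (0 : ℂ)) := by
      refine hφ₀coe.symm.trans ?_
      rw [h0]
      exact Lp.coeFn_zero ℂ 2 volume
    have heq : h = fun _ => 0 :=
      (Continuous.ae_eq_iff_eq volume hcont continuous_const).mp hae
    have h1 : h 0 = 1 := by
      have hb1 : b (0 : ESp m) = 1 :=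
        b.one_of_mem_closedBall (Metric.mem_closedBall_self (by norm_num))
      simp only [h, hb1, Complex.ofReal_one]
    rw [heq] at h1
    simpa using h1
  set N : ℝ := ‖φ₀‖ with hN
  have hNpos : 0 < N := norm_pos_iff.mpr hφ₀ne
  set φ : L2S m := ((N⁻¹ : ℝ) : ℂ) • φ₀ with hφ
  have hφcoe : ⇑φ =ᵐ[volume] fun x => ((N⁻¹ : ℝ) : ℂ) * h x := by
    filter_upwards [Lp.coeFn_smul (((N⁻¹ : ℝ) : ℂ)) φ₀, hφ₀coe] with x h1 h2
    rw [hφ]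
    rw [h1, Pi.smul_apply, smul_eq_mul, h2]
  have hφnorm : ‖φ‖ = 1 := by
    rw [hφ, norm_smul]
    simp only [Complex.norm_real, Real.norm_eq_abs, abs_of_pos (inv_pos.mpr hNpos)]
    rw [← hN]
    field_simp
  -- Schwartz structure and decay of the Fourier transform
  obtain ⟨H, hH⟩ := myToSchwartz hsm hsupp
  set ψ := FourierTransform.fourierCLE ℂ (SchwartzMap (ESp m) ℂ) H with hψdef
  have hψ_eq : ∀ y, ψ y = 𝓕 h y := by
    intro y
    rw [hψdef, FourierTransform.fourierCLE_apply, SchwartzMap.fourier_coe, hH]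
  obtain ⟨C₀, hC₀pos, hC₀⟩ := ψ.decay 0 0
  obtain ⟨C₁, hC₁pos, hC₁⟩ := ψ.decay (m + 3) 0
  have hψ0 : ∀ y, ‖ψ y‖ ≤ C₀ := by
    intro y
    have := hC₀ y
    simpa [norm_iteratedFDeriv_zero] using this
  have hψk : ∀ y, ‖y‖ ^ (m + 3) * ‖ψ y‖ ≤ C₁ := by
    intro y
    have := hC₁ y
    simpa [norm_iteratedFDeriv_zero] using this
  set P : ℝ := 2 ^ (m + 3) * (C₀ + C₁) with hPdef
  have hPpos : 0 < P := by positivity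
  have hP : ∀ y : ESp m, (1 + ‖y‖) ^ (m + 3) * ‖ψ y‖ ≤ P := by
    intro y
    have hyn : (0 : ℝ) ≤ ‖y‖ := norm_nonneg _
    have hmax : (max 1 ‖y‖) ^ (m + 3) ≤ 1 + ‖y‖ ^ (m + 3) := by
      rcases le_total ‖y‖ 1 with hy | hy
      · rw [max_eq_left hy, one_pow]
        nlinarith [pow_nonneg hyn (m + 3)]
      · rw [max_eq_right hy]
        linarith
    have h1 : (1 + ‖y‖) ^ (m + 3) ≤ 2 ^ (m + 3) * (1 + ‖y‖ ^ (m + 3)) := by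
      calc (1 + ‖y‖) ^ (m + 3) ≤ (2 * max 1 ‖y‖) ^ (m + 3) := by
            apply pow_le_pow_left₀ (by linarith)
            have h2 := le_max_left (1 : ℝ) ‖y‖
            have h3 := le_max_right (1 : ℝ) ‖y‖
            linarith
        _ = 2 ^ (m + 3) * (max 1 ‖y‖) ^ (m + 3) := by rw [mul_pow]
        _ ≤ 2 ^ (m + 3) * (1 + ‖y‖ ^ (m + 3)) :=
            mul_le_mul_of_nonneg_left hmax (by positivity)
    calc (1 + ‖y‖) ^ (m + 3) * ‖ψ y‖
        ≤ (2 ^ (m + 3) * (1 + ‖y‖ ^ (m + 3))) * ‖ψ y‖ :=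
          mul_le_mul_of_nonneg_right h1 (norm_nonneg _)
      _ = 2 ^ (m + 3) * (‖ψ y‖ + ‖y‖ ^ (m + 3) * ‖ψ y‖) := by ring
      _ ≤ 2 ^ (m + 3) * (C₀ + C₁) := by
          have h4 := hψ0 y
          have h5 := hψk y
          apply mul_le_mul_of_nonneg_left _ (by positivity)
          linarith
  set C₂ : ℝ := (2 * π) ^ (m + 3) * P with hC₂def
  have hC₂pos : 0 < C₂ := by positivity
  have hkey : ∀ ξ : ESp m,
      ‖ξ‖ ^ 2 * ‖ψ ((2 * π)⁻¹ • ξ)‖ ≤ C₂ * ((1 + ‖ξ‖) ^ (m + 1))⁻¹ := by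
    intro ξ
    set y : ESp m := (2 * π)⁻¹ • ξ with hy
    have h2π : (0 : ℝ) < 2 * π := by positivity
    have h2π1 : (1 : ℝ) ≤ 2 * π := by nlinarith [Real.pi_gt_three]
    have hyn : ‖y‖ = (2 * π)⁻¹ * ‖ξ‖ := by
      rw [hy, norm_smul, Real.norm_eq_abs, abs_of_pos (inv_pos.mpr h2π)]
    have hξy : ‖ξ‖ = (2 * π) * ‖y‖ := by
      rw [hyn]; field_simp
    have hpos : (0 : ℝ) < (1 + ‖ξ‖) ^ (m + 1) := by positivity
    rw [← div_eq_mul_inv, le_div_iff₀ hpos]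
    have a1 : ‖ξ‖ ^ 2 ≤ (2 * π) ^ 2 * (1 + ‖y‖) ^ 2 := by
      rw [hξy]
      nlinarith [norm_nonneg y, h2π]
    have a2 : (1 + ‖ξ‖) ≤ (2 * π) * (1 + ‖y‖) := by
      rw [hξy]
      nlinarith [norm_nonneg y]
    have a3 : (1 + ‖ξ‖) ^ (m + 1) ≤ ((2 * π) * (1 + ‖y‖)) ^ (m + 1) :=
      pow_le_pow_left₀ (by positivity) a2 _
    calc ‖ξ‖ ^ 2 * ‖ψ y‖ * (1 + ‖ξ‖) ^ (m + 1)
        ≤ ((2 * π) ^ 2 * (1 + ‖y‖) ^ 2) * ‖ψ y‖ * ((2 * π) * (1 + ‖y‖)) ^ (m + 1) := by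
          apply mul_le_mul (mul_le_mul_of_nonneg_right a1 (norm_nonneg _)) a3
            (by positivity) (by positivity)
      _ = (2 * π) ^ (m + 3) * ((1 + ‖y‖) ^ (m + 3) * ‖ψ y‖) := by
          rw [mul_pow (2 * π) (1 + ‖y‖) (m + 1)]; ring
      _ ≤ (2 * π) ^ (m + 3) * P :=
          mul_le_mul_of_nonneg_left (hP y) (by positivity)
      _ = C₂ := rfl
  -- the majorant
  set g₀ : ESp m → ℝ := fun ξ => ((1 + ‖ξ‖) ^ (m + 1))⁻¹ with hg₀def
  have hg₀cont : Continuous g₀ :=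
    ((continuous_const.add continuous_norm).pow _).inv₀ (fun x => by show (1 + ‖x‖) ^ (m + 1) ≠ 0; positivity)
  have hg₀nonneg : ∀ ξ, 0 ≤ g₀ ξ := fun ξ => by positivity
  have hg₀sq : ∀ x : ESp m, (g₀ x) ^ 2 = (1 + ‖x‖) ^ (-(((m + 1) * 2 : ℕ) : ℝ)) := by
    intro x
    have ha : (0 : ℝ) < 1 + ‖x‖ := by positivity
    rw [Real.rpow_neg ha.le, Real.rpow_natCast]
    simp only [hg₀def]
    rw [inv_pow, ← pow_mul]
  have hg₀int : Integrable (fun x : ESp m => (g₀ x) ^ 2) := by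
    have hnr : ((Module.finrank ℝ (ESp m) : ℝ)) < (((m + 1) * 2 : ℕ) : ℝ) := by
      simp only [finrank_euclideanSpace, Fintype.card_fin]
      push_cast
      linarith
    have h1 := integrable_one_add_norm (E := ESp m) (μ := volume)
      (r := (((m + 1) * 2 : ℕ) : ℝ)) hnr
    exact h1.congr (Filter.Eventually.of_forall fun x => (hg₀sq x).symm)
  have hg₀mem : MemLp g₀ 2 (volume : Measure (ESp m)) :=
    (memLp_two_iff_integrable_sq hg₀cont.aestronglyMeasurable).mpr hg₀int
  set gLp : Lp ℝ 2 (volume : Measure (ESp m)) := hg₀mem.toLp g₀ with hgLp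
  set K : ℝ := ‖gLp‖ with hK
  have hK0 : 0 ≤ K := norm_nonneg _
  -- constants
  set cm : ℝ := (2 * π) ^ (-(m : ℝ) / 2) with hcm
  have hcmpos : 0 < cm := Real.rpow_pos_of_pos (by positivity) _
  set A : ℝ := N⁻¹ * cm * C₂ with hA
  have hApos : 0 < A := by positivity
  -- a.e. description of F φ
  have hFφ : ⇑(F φ) =ᵐ[volume]
      fun ξ => ((N⁻¹ : ℝ) : ℂ) * ((cm : ℝ) * ψ ((2 * π)⁻¹ • ξ)) := by
    have hmap : F φ = ((N⁻¹ : ℝ) : ℂ) • F φ₀ := by rw [hφ, F.map_smul]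
    have h1 : ⇑(F φ) =ᵐ[volume] ((N⁻¹ : ℝ) : ℂ) • ⇑(F φ₀) := by
      rw [hmap]; exact Lp.coeFn_smul _ _
    have h2 := hF h hint hmem
    filter_upwards [h1, h2] with ξ e1 e2
    rw [e1, Pi.smul_apply, smul_eq_mul, e2, myFourierEq, ← hψ_eq]
  -- main norm bound
  have hSle : ∀ f : ℝ, 0 < f → ‖S f φ‖ ≤ A * K / f := by
    intro f hf
    have hmaj : ∀ᵐ ξ ∂(volume : Measure (ESp m)),
        ‖(F (S f φ) : ESp m → ℂ) ξ‖ ≤ ‖((A / f) • gLp : Lp ℝ 2 _) ξ‖ := by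
      filter_upwards [hS f hf φ, hFφ, Lp.coeFn_smul ((A / f) : ℝ) gLp,
        hg₀mem.coeFn_toLp] with ξ e1 e2 e3 e4
      rw [e1, e2, e3, Pi.smul_apply, hgLp, e4, smul_eq_mul]
      have hAf : 0 ≤ A / f := le_of_lt (div_pos hApos hf)
      rw [Real.norm_eq_abs, _root_.abs_of_nonneg (mul_nonneg hAf (hg₀nonneg ξ))]
      set y : ESp m := (2 * π)⁻¹ • ξ
      set t : ℝ := ‖ξ‖ ^ 2 / (2 * f) with ht
      have ht0 : 0 ≤ t := by positivity
      have hnorm : ‖((2 * Real.sin t : ℝ) : ℂ) *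
          (((N⁻¹ : ℝ) : ℂ) * ((cm : ℝ) * ψ y))‖
          = |2 * Real.sin t| * (N⁻¹ * (cm * ‖ψ y‖)) := by
        rw [norm_mul, norm_mul, norm_mul, Complex.norm_real, Complex.norm_real,
          Complex.norm_real, Real.norm_eq_abs, Real.norm_eq_abs, Real.norm_eq_abs,
          abs_of_pos (inv_pos.mpr hNpos), abs_of_pos hcmpos]
      rw [hnorm]
      have hsin : |2 * Real.sin t| ≤ ‖ξ‖ ^ 2 / f := by
        rw [_root_.abs_mul, _root_.abs_two]
        have h5 : |Real.sin t| ≤ t := le_trans Real.abs_sin_le_abs (le_of_eq (abs_of_nonneg ht0))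
        calc 2 * |Real.sin t| ≤ 2 * t := by linarith
          _ = ‖ξ‖ ^ 2 / f := by rw [ht]; field_simp
      calc |2 * Real.sin t| * (N⁻¹ * (cm * ‖ψ y‖))
          ≤ (‖ξ‖ ^ 2 / f) * (N⁻¹ * (cm * ‖ψ y‖)) := by
            apply mul_le_mul_of_nonneg_right hsin
            positivity
        _ = (N⁻¹ * cm / f) * (‖ξ‖ ^ 2 * ‖ψ y‖) := by ring
        _ ≤ (N⁻¹ * cm / f) * (C₂ * g₀ ξ) := by
            apply mul_le_mul_of_nonneg_left _ (by positivity)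
            exact hkey ξ
        _ = A / f * g₀ ξ := by rw [hA, hg₀def]; ring
    have hb1 : ‖F (S f φ)‖ ≤ ‖((A / f) • gLp : Lp ℝ 2 _)‖ :=
      Lp.norm_le_norm_of_ae_le hmaj
    have hb2 : ‖S f φ‖ = ‖F (S f φ)‖ := (F.norm_map _).symm
    have hb3 : ‖((A / f) • gLp : Lp ℝ 2 _)‖ = A * K / f := by
      rw [norm_smul, Real.norm_eq_abs, abs_of_pos (div_pos hApos hf), ← hK]
      ring
    rw [hb2, ← hb3]
    exact hb1
  -- membership and the key inequality
  have key : ∀ f : ℝ, 0 < f → min c₁' (c₂' * f ^ (-ν)) ≤ A * K / f := by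
    intro f hf
    have hsupp_ae : ∀ᵐ x ∂(volume : Measure (ESp m)),
        x ∉ Metric.closedBall (0 : ESp m) (1/2) → (φ : ESp m → ℂ) x = 0 := by
      filter_upwards [hφcoe] with x hx hxmem
      rw [hx]
      have hbx : b x = 0 := by
        by_contra hne
        have hxs : x ∈ Function.support b := hne
        rw [b.support_eq] at hxs
        exact hxmem (Metric.ball_subset_closedBall hxs)
      show ((N⁻¹ : ℝ) : ℂ) * ((b x : ℝ) : ℂ) = 0
      rw [hbx]
      simp
    have him_ae : ∀ᵐ x ∂(volume : Measure (ESp m)), ((φ : ESp m → ℂ) x).im = 0 := by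
      filter_upwards [hφcoe] with x hx
      rw [hx]
      show (((N⁻¹ : ℝ) : ℂ) * ((b x : ℝ) : ℂ)).im = 0
      rw [← Complex.ofReal_mul, Complex.ofReal_im]
    have hmemset : ‖S f φ‖ ∈ {r : ℝ | ∃ φ : L2S m,
        (∀ᵐ x ∂(volume : Measure (ESp m)),
          x ∉ Metric.closedBall (0 : ESp m) (1/2) → (φ : ESp m → ℂ) x = 0) ∧
        (∀ᵐ x ∂(volume : Measure (ESp m)), ((φ : ESp m → ℂ) x).im = 0) ∧
        ‖φ‖ = 1 ∧ r = ‖S f φ‖} := ⟨φ, hsupp_ae, him_ae, hφnorm, rfl⟩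
    have hbdd : BddBelow {r : ℝ | ∃ φ : L2S m,
        (∀ᵐ x ∂(volume : Measure (ESp m)),
          x ∉ Metric.closedBall (0 : ESp m) (1/2) → (φ : ESp m → ℂ) x = 0) ∧
        (∀ᵐ x ∂(volume : Measure (ESp m)), ((φ : ESp m → ℂ) x).im = 0) ∧
        ‖φ‖ = 1 ∧ r = ‖S f φ‖} := by
      refine ⟨0, ?_⟩
      rintro r ⟨ψ', -, -, -, rfl⟩
      exact norm_nonneg _
    exact le_trans (hbound f hf) (le_trans (csInf_le hbdd hmemset) (hSle f hf))
  -- final asymptotic argument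
  by_contra hcon
  push_neg at hcon
  have e1 : ∀ᶠ f in (atTop : Filter ℝ), c₂' * f ^ (-ν) < c₁' := by
    have h0 : Tendsto (fun f : ℝ => c₂' * f ^ (-ν)) atTop (nhds (c₂' * 0)) :=
      (tendsto_rpow_neg_atTop hν).const_mul c₂'
    rw [mul_zero] at h0
    exact h0.eventually_lt_const hc₁
  have e2 : ∀ᶠ f in (atTop : Filter ℝ), A * K < c₂' * f ^ (1 - ν) :=
    ((tendsto_rpow_atTop (by linarith : (0:ℝ) < 1 - ν)).const_mul_atTop hc₂).eventually_gt_atTop _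
  have e3 : ∀ᶠ f in (atTop : Filter ℝ), (0 : ℝ) < f := eventually_gt_atTop 0
  obtain ⟨f, h1, h2, h3⟩ := (e1.and (e2.and e3)).exists
  have hmin : min c₁' (c₂' * f ^ (-ν)) = c₂' * f ^ (-ν) := min_eq_right h1.le
  have h4 : c₂' * f ^ (-ν) ≤ A * K / f := by
    rw [← hmin]; exact key f h3
  have h5 : c₂' * f ^ (-ν) * f ≤ A * K := (le_div_iff₀ h3).mp h4
  have h6 : c₂' * f ^ (1 - ν) ≤ A * K := by
    have hx : f ^ (1 - ν) = f ^ (-ν) * f := by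
      rw [show (1 - ν) = -ν + 1 by ring, Real.rpow_add h3, Real.rpow_one]
    rw [hx, ← mul_assoc]
    exact h5
  linarith
end
end

section
/- Stability for two measurements (Theorem 5.1): let m ≥ 1 and 0 < f₁ < f₂ be two Fresnel numbers, and set f₋ := (f₁⁻¹ − f₂⁻¹)⁻¹ > 0. Define S⁽²⁾(φ, μ) := (g₁, g₂) with g_j := 2F⁻¹( ξ ↦ sin(|ξ|²/(2f_j))·F(φ)(ξ) − cos(|ξ|²/(2f_j))·F(μ)(ξ) ) for j = 1, 2, and ‖(g₁,g₂)‖ := (‖g₁‖² + ‖g₂‖²)^{1/2}. Then: (i) for all real-valued φ, μ ∈ L²(ℝ^m), ‖S⁽²⁾(φ, μ)‖ ≥ 2^{-1/2}·‖S₀^{f₋}(φ + iμ)‖, where S₀^{f₋} h := 2F⁻¹( ξ ↦ sin(|ξ|²/(2f₋))·F(h)(ξ) ); (ii) for every measurable Ω ⊆ ℝ^m and all real-valued φ, μ ∈ L²_Ω, ‖S⁽²⁾(φ, μ)‖ ≥ 2^{-1/2}·C·(‖φ‖² + ‖μ‖²)^{1/2}, where C := inf{ ‖S₀^{f₋} ψ‖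 : ψ ∈ L²_Ω real-valued, ‖ψ‖ = 1 }. -/
open MeasureTheory Complex Real Filter
open scoped ENNReal InnerProductSpace ComplexConjugate

noncomputable section

namespace St16Aux
variable {m : ℕ}

def negL (u : L2S m) : L2S m :=
  Lp.compMeasurePreserving Neg.neg (Measure.measurePreserving_neg _) u

lemma negL_coe (u : L2S m) : ⇑(negL u) =ᵐ[volume] fun ξ => u (-ξ) :=
  Lp.coeFn_compMeasurePreserving u _

lemma negt : Tendsto (Neg.neg : ESp m → ESp m) (ae volume) (ae volume) :=
  (Measure.measurePreserving_neg _).quasiMeasurePreserving.tendsto_ae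

def conjL (u : L2S m) : L2S m := (Complex.conjCLE.toContinuousLinearMap).compLp u

lemma conjL_coe (u : L2S m) : ⇑(conjL u) =ᵐ[volume] fun x => conj (u x) :=
  ContinuousLinearMap.coeFn_compLp' _ u

lemma conj_fourier {F : L2S m ≃ₗᵢ[ℂ] L2S m} (hF : IsFourierTransform m F) (u : L2S m) :
    F (conjL u) = negL (conjL (F u)) := by
  have hΦ : Continuous fun v : L2S m => F (conjL v) :=
    F.continuous.comp (Complex.conjCLE.toContinuousLinearMap.compLpL 2 volume).continuous
  have hΨ : Continuous fun v : L2S m => negL (conjL (F v)) :=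
    ((Lp.isometry_compMeasurePreserving (E := ℂ) (p := 2)
        (Measure.measurePreserving_neg (volume : Measure (ESp m)))).continuous.comp
      (Complex.conjCLE.toContinuousLinearMap.compLpL 2 volume).continuous).comp F.continuous
  have hclosed : IsClosed {v : L2S m | F (conjL v) = negL (conjL (F v))} := isClosed_eq hΦ hΨ
  -- nice elements are in the set
  have hnice : ∀ (g : ESp m → ℂ), Continuous g → HasCompactSupport g →
      ∀ (hg2 : MemLp g 2 (volume : Measure (ESp m))),
      F (conjL (hg2.toLp g)) = negL (conjL (F (hg2.toLp g))) := by
    intro g gc gs hg2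
    have hg1 : Integrable g := gc.integrable_of_hasCompactSupport gs
    have hgc2 : MemLp (fun x => conj (g x)) 2 (volume : Measure (ESp m)) :=
      Complex.conjCLE.toContinuousLinearMap.comp_memLp' hg2
    have hgc1 : Integrable (fun x => conj (g x)) :=
      Complex.conjCLE.toContinuousLinearMap.integrable_comp hg1
    -- LHS
    have hL1 : conjL (hg2.toLp g) = hgc2.toLp _ := by
      apply Lp.ext
      refine (conjL_coe _).trans ?_
      refine EventuallyEq.trans ?_ hgc2.coeFn_toLp.symm
      filter_upwards [hg2.coeFn_toLp] with x hx
      simp [hx]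
    have hL : ⇑(F (conjL (hg2.toLp g))) =ᵐ[volume]
        fun ξ => (((2 * π) ^ (-(m : ℝ) / 2) : ℝ) : ℂ) *
          ∫ x, conj (g x) * Complex.exp (-Complex.I * (⟪ξ, x⟫_ℝ : ℝ)) := by
      rw [hL1]; exact hF _ hgc1 hgc2
    -- RHS
    have hFg := hF g hg1 hg2
    have hR : ⇑(negL (conjL (F (hg2.toLp g)))) =ᵐ[volume]
        fun ξ => conj ((((2 * π) ^ (-(m : ℝ) / 2) : ℝ) : ℂ) *
          ∫ x, g x * Complex.exp (-Complex.I * (⟪-ξ, x⟫_ℝ : ℝ))) := by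
      refine (negL_coe _).trans ?_
      have h4 : ⇑(conjL (F (hg2.toLp g))) =ᵐ[volume]
          fun ξ => conj ((((2 * π) ^ (-(m : ℝ) / 2) : ℝ) : ℂ) *
            ∫ x, g x * Complex.exp (-Complex.I * (⟪ξ, x⟫_ℝ : ℝ))) := by
        filter_upwards [conjL_coe (F (hg2.toLp g)), hFg] with ξ h5 h6
        rw [h5, h6]
      exact h4.comp_tendsto negt
    -- pointwise identity
    have hpt : ∀ ξ : ESp m, conj ((((2 * π) ^ (-(m : ℝ) / 2) : ℝ) : ℂ) *
          ∫ x, g x * Complex.exp (-Complex.I * (⟪-ξ, x⟫_ℝ : ℝ)))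
        = (((2 * π) ^ (-(m : ℝ) / 2) : ℝ) : ℂ) *
          ∫ x, conj (g x) * Complex.exp (-Complex.I * (⟪ξ, x⟫_ℝ : ℝ)) := by
      intro ξ
      rw [map_mul, Complex.conj_ofReal, ← integral_conj]
      congr 1
      refine integral_congr_ae (Eventually.of_forall fun x => ?_)
      dsimp only
      rw [map_mul, ← Complex.exp_conj]
      congr 1
      simp [inner_neg_left]
    apply Lp.ext
    refine hL.trans (EventuallyEq.trans ?_ hR.symm)
    exact Eventually.of_forall fun ξ => (hpt ξ).symm
  -- density
  have key : ∀ n : ℕ, ∃ v : L2S m,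
      (F (conjL v) = negL (conjL (F v))) ∧ ‖u - v‖ ≤ 1 / (n + 1) := by
    intro n
    obtain ⟨g, gs, hge, gc, hg2⟩ := (Lp.memLp u).exists_hasCompactSupport_eLpNorm_sub_le
      (p := 2) (by norm_num) (ε := ENNReal.ofReal (1 / (n + 1)))
      (by positivity)
    refine ⟨hg2.toLp g, hnice g gc gs hg2, ?_⟩
    have : ⇑(u - hg2.toLp g) =ᵐ[volume] (⇑u - g) := by
      refine (Lp.coeFn_sub u (hg2.toLp g)).trans ?_
      filter_upwards [hg2.coeFn_toLp] with x hx2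
      simp [Pi.sub_apply, hx2]
    rw [Lp.norm_def, eLpNorm_congr_ae this]
    refine ENNReal.toReal_le_of_le_ofReal (by positivity) hge
  choose v hv1 hv2 using key
  have hvt : Tendsto v atTop (nhds u) := by
    rw [tendsto_iff_dist_tendsto_zero]
    refine squeeze_zero (fun n => dist_nonneg) (fun n => ?_)
      tendsto_one_div_add_atTop_nhds_zero_nat
    rw [dist_comm, dist_eq_norm]
    exact hv2 n
  exact hclosed.mem_of_tendsto hvt (Eventually.of_forall hv1)

lemma herm {F : L2S m ≃ₗᵢ[ℂ] L2S m} (hF : IsFourierTransform m F) (φ : L2S m)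
    (hre : ∀ᵐ x ∂(volume : Measure (ESp m)), ((φ : ESp m → ℂ) x).im = 0) :
    ∀ᵐ ξ ∂(volume : Measure (ESp m)),
      (F φ : ESp m → ℂ) ξ = conj ((F φ : ESp m → ℂ) (-ξ)) := by
  have h1 : conjL φ = φ := by
    apply Lp.ext
    refine (conjL_coe φ).trans ?_
    filter_upwards [hre] with x hx
    exact Complex.conj_eq_iff_im.mpr hx
  have h2 := conj_fourier hF φ
  rw [h1] at h2
  have h3 : ⇑(negL (conjL (F φ))) =ᵐ[volume] fun ξ => conj ((F φ : ESp m → ℂ) (-ξ)) := by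
    refine (negL_coe _).trans ?_
    exact (conjL_coe (F φ)).comp_tendsto negt
  have h4 : ⇑(F φ) =ᵐ[volume] ⇑(negL (conjL (F φ))) := by rw [← h2]
  exact h4.trans h3

lemma cross (w : ESp m → ℝ) (hw : ∀ ξ : ESp m, w (-ξ) = w ξ) (A B a b : L2S m)
    (hA : ⇑A =ᵐ[volume] fun ξ => (w ξ : ℂ) * a ξ)
    (hB : ⇑B =ᵐ[volume] fun ξ => (w ξ : ℂ) * b ξ)
    (ha : ∀ᵐ ξ ∂(volume : Measure (ESp m)), (a : ESp m → ℂ) ξ = conj ((a : ESp m → ℂ) (-ξ)))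
    (hb : ∀ᵐ ξ ∂(volume : Measure (ESp m)), (b : ESp m → ℂ) ξ = conj ((b : ESp m → ℂ) (-ξ))) :
    (⟪A, B⟫_ℂ).im = 0 := by
  have hinner : ⟪A, B⟫_ℂ = ∫ ξ, ⟪(A : ESp m → ℂ) ξ, (B : ESp m → ℂ) ξ⟫_ℂ :=
    MeasureTheory.L2.inner_def A B
  have hint : Integrable (fun ξ => ⟪(A : ESp m → ℂ) ξ, (B : ESp m → ℂ) ξ⟫_ℂ) volume :=
    MeasureTheory.L2.integrable_inner A B
  rw [hinner]
  show RCLike.im (∫ ξ, ⟪(A : ESp m → ℂ) ξ, (B : ESp m → ℂ) ξ⟫_ℂ ∂volume) = 0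
  rw [← integral_im hint]
  show ∫ ξ, (⟪(A : ESp m → ℂ) ξ, (B : ESp m → ℂ) ξ⟫_ℂ).im ∂volume = 0
  set k : ESp m → ℝ := fun ξ => (⟪(A : ESp m → ℂ) ξ, (B : ESp m → ℂ) ξ⟫_ℂ).im with hk
  have hsym : (fun ξ => k (-ξ)) =ᵐ[volume] fun ξ => -k ξ := by
    have hA' := hA.comp_tendsto (negt (m := m))
    have hB' := hB.comp_tendsto (negt (m := m))
    filter_upwards [hA, hB, hA', hB', ha, hb] with ξ e1 e2 e3 e4 e5 e6
    simp only [Function.comp_apply] at e3 e4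
    have ea : (a : ESp m → ℂ) (-ξ) = conj ((a : ESp m → ℂ) ξ) := by
      rw [e5, Complex.conj_conj]
    have eb : (b : ESp m → ℂ) (-ξ) = conj ((b : ESp m → ℂ) ξ) := by
      rw [e6, Complex.conj_conj]
    simp only [hk, e1, e2, e3, e4, ea, eb, hw ξ, RCLike.inner_apply]
    simp [Complex.mul_im, Complex.mul_re]
    ring
  have h0 : ∫ ξ, k ξ = ∫ ξ, k (-ξ) := (integral_neg_eq_self k volume).symm
  have h1 : ∫ ξ, k (-ξ) = - ∫ ξ, k ξ := by
    rw [integral_congr_ae hsym, integral_neg]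
  linarith [h0, h1]
end St16Aux

set_option maxHeartbeats 1000000 in
/-- **stability for two measurements, Theorem 5.1.**  Let `0 < f₁ < f₂`,
`f₋ = (f₁⁻¹ − f₂⁻¹)⁻¹`, `S⁽²⁾(φ,μ) = (g₁,g₂)` with
`g_j = 2F⁻¹(sin(|ξ|²/(2f_j))Fφ − cos(|ξ|²/(2f_j))Fμ)`, and let `S₀ = S₀^{f₋}` be the
non-absorbing forward operator at Fresnel number `f₋`.  Then (i) for all real-valued
`φ, μ ∈ L²`: `‖S⁽²⁾(φ,μ)‖ ≥ 2^{-1/2}‖S₀^{f₋}(φ+iμ)‖`; (ii) for measurable `Ω` and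
real-valued `φ, μ ∈ L²_Ω`: `‖S⁽²⁾(φ,μ)‖ ≥ 2^{-1/2}·C·(‖φ‖²+‖μ‖²)^{1/2}` with
`C = inf{‖S₀^{f₋}ψ‖ : ψ ∈ L²_Ω real-valued, ‖ψ‖ = 1}`. -/
theorem statement16 (m : ℕ) (hm : 1 ≤ m) (f₁ f₂ : ℝ) (hf₁ : 0 < f₁) (hf₁₂ : f₁ < f₂)
    (F : L2S m ≃ₗᵢ[ℂ] L2S m) (hF : IsFourierTransform m F)
    (S2 : L2S m → L2S m → L2S m × L2S m)
    (hS2 : ∀ φ μ : L2S m,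
      ((F (S2 φ μ).1 : ESp m → ℂ) =ᵐ[volume] fun ξ =>
        2 * (((Real.sin (‖ξ‖ ^ 2 / (2 * f₁)) : ℝ) : ℂ) * (F φ : ESp m → ℂ) ξ
           - ((Real.cos (‖ξ‖ ^ 2 / (2 * f₁)) : ℝ) : ℂ) * (F μ : ESp m → ℂ) ξ)) ∧
      ((F (S2 φ μ).2 : ESp m → ℂ) =ᵐ[volume] fun ξ =>
        2 * (((Real.sin (‖ξ‖ ^ 2 / (2 * f₂)) : ℝ) : ℂ) * (F φ : ESp m → ℂ) ξ
           - ((Real.cos (‖ξ‖ ^ 2 / (2 * f₂)) : ℝ) : ℂ) * (F μ : ESp m → ℂ) ξ)))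
    (S0 : L2S m → L2S m)
    (hS0 : ∀ u : L2S m,
      (F (S0 u) : ESp m → ℂ) =ᵐ[volume] fun ξ =>
        ((2 * Real.sin (‖ξ‖ ^ 2 / (2 * (f₁⁻¹ - f₂⁻¹)⁻¹)) : ℝ) : ℂ) * (F u : ESp m → ℂ) ξ) :
    (∀ φ μ : L2S m,
      (∀ᵐ x ∂(volume : Measure (ESp m)), ((φ : ESp m → ℂ) x).im = 0) →
      (∀ᵐ x ∂(volume : Measure (ESp m)), ((μ : ESp m → ℂ) x).im = 0) →
      Real.sqrt (‖(S2 φ μ).1‖ ^ 2 + ‖(S2 φ μ).2‖ ^ 2)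
        ≥ (Real.sqrt 2)⁻¹ * ‖S0 (φ + Complex.I • μ)‖) ∧
    (∀ Ω : Set (ESp m), MeasurableSet Ω →
      ∀ φ μ : L2S m,
      (∀ᵐ x ∂(volume : Measure (ESp m)), ((φ : ESp m → ℂ) x).im = 0) →
      (∀ᵐ x ∂(volume : Measure (ESp m)), ((μ : ESp m → ℂ) x).im = 0) →
      (∀ᵐ x ∂(volume : Measure (ESp m)), x ∉ Ω → (φ : ESp m → ℂ) x = 0) →
      (∀ᵐ x ∂(volume : Measure (ESp m)), x ∉ Ω → (μ : ESp m → ℂ) x = 0) →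
      Real.sqrt (‖(S2 φ μ).1‖ ^ 2 + ‖(S2 φ μ).2‖ ^ 2)
        ≥ (Real.sqrt 2)⁻¹ *
          sInf {r : ℝ | ∃ ψ : L2S m,
            (∀ᵐ x ∂(volume : Measure (ESp m)), ((ψ : ESp m → ℂ) x).im = 0) ∧
            (∀ᵐ x ∂(volume : Measure (ESp m)), x ∉ Ω → (ψ : ESp m → ℂ) x = 0) ∧
            ‖ψ‖ = 1 ∧ r = ‖S0 ψ‖} *
          Real.sqrt (‖φ‖ ^ 2 + ‖μ‖ ^ 2)) := by
  classical
  have hf₂ : 0 < f₂ := hf₁.trans hf₁₂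
  have hd : 0 < f₁⁻¹ - f₂⁻¹ := sub_pos.mpr (by
    have := one_div_lt_one_div_of_lt hf₁ hf₁₂
    simpa [one_div] using this)
  have hf1ne : f₁ ≠ 0 := ne_of_gt hf₁
  have hf2ne : f₂ ≠ 0 := ne_of_gt hf₂
  have hdne : f₁⁻¹ - f₂⁻¹ ≠ 0 := ne_of_gt hd
  have θeq : ∀ ξ : ESp m, ‖ξ‖ ^ 2 / (2 * (f₁⁻¹ - f₂⁻¹)⁻¹)
      = ‖ξ‖ ^ 2 / (2 * f₁) - ‖ξ‖ ^ 2 / (2 * f₂) := by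
    intro ξ
    rw [inv_sub_inv hf1ne hf2ne] at *
    field_simp
  -- Part (i), without any realness assumption
  have parti : ∀ φ μ : L2S m, (Real.sqrt 2)⁻¹ * ‖S0 (φ + Complex.I • μ)‖
      ≤ Real.sqrt (‖(S2 φ μ).1‖ ^ 2 + ‖(S2 φ μ).2‖ ^ 2) := by
    intro φ μ
    obtain ⟨h1, h2⟩ := hS2 φ μ
    have h0 := hS0 (φ + Complex.I • μ)
    have hsum : ⇑(F (φ + Complex.I • μ)) =ᵐ[volume]
        fun ξ => (F φ : ESp m → ℂ) ξ + Complex.I * (F μ : ESp m → ℂ) ξ := by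
      have he : F (φ + Complex.I • μ) = F φ + Complex.I • F μ := by
        rw [map_add, _root_.map_smul]
      rw [he]
      refine (Lp.coeFn_add _ _).trans ?_
      filter_upwards [Lp.coeFn_smul Complex.I (F μ)] with ξ hξ
      simp [Pi.add_apply, hξ, smul_eq_mul]
    have hpoint : ∀ᵐ ξ ∂(volume : Measure (ESp m)),
        ‖(F (S0 (φ + Complex.I • μ)) : ESp m → ℂ) ξ‖ ≤
          ‖(F (S2 φ μ).1 : ESp m → ℂ) ξ‖ + ‖(F (S2 φ μ).2 : ESp m → ℂ) ξ‖ := by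
      filter_upwards [h0, h1, h2, hsum] with ξ e0 e1 e2 e3
      rw [e0, e1, e2, e3]
      set a := (F φ : ESp m → ℂ) ξ with ha
      set b := (F μ : ESp m → ℂ) ξ with hb
      set s1 := Real.sin (‖ξ‖ ^ 2 / (2 * f₁)) with hs1
      set c1 := Real.cos (‖ξ‖ ^ 2 / (2 * f₁)) with hc1
      set s2 := Real.sin (‖ξ‖ ^ 2 / (2 * f₂)) with hs2
      set c2 := Real.cos (‖ξ‖ ^ 2 / (2 * f₂)) with hc2
      have none : ∀ c s : ℝ, c ^ 2 + s ^ 2 = 1 → ‖((c : ℂ) + (s : ℂ) * Complex.I)‖ = 1 := by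
        intro c s h
        have : ‖((c : ℂ) + (s : ℂ) * Complex.I)‖ = 1 := by
          rw [Complex.norm_def, Complex.normSq_add_mul_I, h, Real.sqrt_one]
        exact this
      have key : ((2 * Real.sin (‖ξ‖ ^ 2 / (2 * (f₁⁻¹ - f₂⁻¹)⁻¹)) : ℝ) : ℂ) * (a + Complex.I * b)
          = ((c2 : ℂ) + (s2 : ℂ) * Complex.I) * (2 * ((s1 : ℂ) * a - (c1 : ℂ) * b))
            - ((c1 : ℂ) + (s1 : ℂ) * Complex.I) * (2 * ((s2 : ℂ) * a - (c2 : ℂ) * b)) := by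
        rw [θeq ξ, Real.sin_sub, ← hs1, ← hc1, ← hs2, ← hc2]
        push_cast
        ring
      rw [key]
      calc ‖((c2 : ℂ) + (s2 : ℂ) * Complex.I) * (2 * ((s1 : ℂ) * a - (c1 : ℂ) * b))
            - ((c1 : ℂ) + (s1 : ℂ) * Complex.I) * (2 * ((s2 : ℂ) * a - (c2 : ℂ) * b))‖
          ≤ ‖((c2 : ℂ) + (s2 : ℂ) * Complex.I) * (2 * ((s1 : ℂ) * a - (c1 : ℂ) * b))‖
            + ‖((c1 : ℂ) + (s1 : ℂ) * Complex.I) * (2 * ((s2 : ℂ) * a - (c2 : ℂ) * b))‖ :=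
            norm_sub_le _ _
        _ = ‖2 * ((s1 : ℂ) * a - (c1 : ℂ) * b)‖ + ‖2 * ((s2 : ℂ) * a - (c2 : ℂ) * b)‖ := by
            rw [norm_mul ((c2:ℂ) + (s2:ℂ) * Complex.I) _,
              norm_mul ((c1:ℂ) + (s1:ℂ) * Complex.I) _,
              none c2 s2 (Real.cos_sq_add_sin_sq _),
              none c1 s1 (Real.cos_sq_add_sin_sq _), one_mul, one_mul]
    have hnorm : ‖S0 (φ + Complex.I • μ)‖ ≤ ‖(S2 φ μ).1‖ + ‖(S2 φ μ).2‖ := by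
      rw [← F.norm_map (S0 (φ + Complex.I • μ)), ← F.norm_map (S2 φ μ).1,
        ← F.norm_map (S2 φ μ).2, Lp.norm_def, Lp.norm_def, Lp.norm_def]
      have t1 := Lp.eLpNorm_ne_top (F (S2 φ μ).1)
      have t2 := Lp.eLpNorm_ne_top (F (S2 φ μ).2)
      have hle : eLpNorm ⇑(F (S0 (φ + Complex.I • μ))) 2 volume
          ≤ eLpNorm ⇑(F (S2 φ μ).1) 2 volume + eLpNorm ⇑(F (S2 φ μ).2) 2 volume := by
        calc eLpNorm ⇑(F (S0 (φ + Complex.I • μ))) 2 volume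
            ≤ eLpNorm (fun ξ => ‖(F (S2 φ μ).1 : ESp m → ℂ) ξ‖
                + ‖(F (S2 φ μ).2 : ESp m → ℂ) ξ‖) 2 volume := by
              refine eLpNorm_mono_ae ?_
              filter_upwards [hpoint] with ξ h
              rw [Real.norm_of_nonneg (by positivity)]
              exact h
          _ ≤ eLpNorm (fun ξ => ‖(F (S2 φ μ).1 : ESp m → ℂ) ξ‖) 2 volume
              + eLpNorm (fun ξ => ‖(F (S2 φ μ).2 : ESp m → ℂ) ξ‖) 2 volume :=
              eLpNorm_add_le ((Lp.aestronglyMeasurable _).norm)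
                ((Lp.aestronglyMeasurable _).norm) one_le_two
          _ = eLpNorm ⇑(F (S2 φ μ).1) 2 volume + eLpNorm ⇑(F (S2 φ μ).2) 2 volume := by
              rw [eLpNorm_norm, eLpNorm_norm]
      calc (eLpNorm ⇑(F (S0 (φ + Complex.I • μ))) 2 volume).toReal
          ≤ (eLpNorm ⇑(F (S2 φ μ).1) 2 volume + eLpNorm ⇑(F (S2 φ μ).2) 2 volume).toReal :=
            ENNReal.toReal_mono (ENNReal.add_ne_top.mpr ⟨t1, t2⟩) hle
        _ = (eLpNorm ⇑(F (S2 φ μ).1) 2 volume).toReal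
            + (eLpNorm ⇑(F (S2 φ μ).2) 2 volume).toReal := ENNReal.toReal_add t1 t2
    set x := ‖(S2 φ μ).1‖ with hx
    set y := ‖(S2 φ μ).2‖ with hy
    have hxy : x + y ≤ Real.sqrt 2 * Real.sqrt (x ^ 2 + y ^ 2) := by
      have h3 : (x + y) ^ 2 ≤ 2 * (x ^ 2 + y ^ 2) := by nlinarith [sq_nonneg (x - y)]
      have h4 := Real.sqrt_le_sqrt h3
      rwa [Real.sqrt_sq (by positivity), Real.sqrt_mul (by norm_num)] at h4
    have hs2pos : (0 : ℝ) < Real.sqrt 2 := by positivity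
    have : ‖S0 (φ + Complex.I • μ)‖ ≤ Real.sqrt 2 * Real.sqrt (x ^ 2 + y ^ 2) :=
      hnorm.trans hxy
    calc (Real.sqrt 2)⁻¹ * ‖S0 (φ + Complex.I • μ)‖
        ≤ (Real.sqrt 2)⁻¹ * (Real.sqrt 2 * Real.sqrt (x ^ 2 + y ^ 2)) := by
          exact mul_le_mul_of_nonneg_left this (by positivity)
      _ = Real.sqrt (x ^ 2 + y ^ 2) := by
          field_simp
  constructor
  · intro φ μ _ _
    exact parti φ μ
  · intro Ω hΩ φ μ hφre hμre hφsupp hμsupp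
    -- linearity of S0
    have hS0smul : ∀ (c : ℂ) (u : L2S m), S0 (c • u) = c • S0 u := by
      intro c u
      apply F.injective
      apply Lp.ext
      refine (hS0 (c • u)).trans ?_
      have hcu : ⇑(F (c • u)) =ᵐ[volume] fun ξ => c * (F u : ESp m → ℂ) ξ := by
        rw [_root_.map_smul]
        filter_upwards [Lp.coeFn_smul c (F u)] with ξ hξ
        simp [hξ, smul_eq_mul]
      have hcs : ⇑(F (c • S0 u)) =ᵐ[volume] fun ξ => c * (F (S0 u) : ESp m → ℂ) ξ := by
        rw [_root_.map_smul]
        filter_upwards [Lp.coeFn_smul c (F (S0 u))] with ξ hξ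
        simp [hξ, smul_eq_mul]
      refine EventuallyEq.trans ?_ hcs.symm
      filter_upwards [hcu, hS0 u] with ξ e1 e2
      rw [e1, e2]
      ring
    have hS0add : ∀ u v : L2S m, S0 (u + v) = S0 u + S0 v := by
      intro u v
      apply F.injective
      apply Lp.ext
      refine (hS0 (u + v)).trans ?_
      have hcu : ⇑(F (u + v)) =ᵐ[volume]
          fun ξ => (F u : ESp m → ℂ) ξ + (F v : ESp m → ℂ) ξ := by
        rw [map_add]
        filter_upwards [Lp.coeFn_add (F u) (F v)] with ξ hξ
        simpa [Pi.add_apply] using hξ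
      have hcs : ⇑(F (S0 u + S0 v)) =ᵐ[volume]
          fun ξ => (F (S0 u) : ESp m → ℂ) ξ + (F (S0 v) : ESp m → ℂ) ξ := by
        rw [map_add]
        filter_upwards [Lp.coeFn_add (F (S0 u)) (F (S0 v))] with ξ hξ
        simpa [Pi.add_apply] using hξ
      refine EventuallyEq.trans ?_ hcs.symm
      filter_upwards [hcu, hS0 u, hS0 v] with ξ e1 e2 e3
      rw [e1, e2, e3]
      ring
    set SS := {r : ℝ | ∃ ψ : L2S m,
      (∀ᵐ x ∂(volume : Measure (ESp m)), ((ψ : ESp m → ℂ) x).im = 0) ∧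
      (∀ᵐ x ∂(volume : Measure (ESp m)), x ∉ Ω → (ψ : ESp m → ℂ) x = 0) ∧
      ‖ψ‖ = 1 ∧ r = ‖S0 ψ‖} with hSS
    have hbdd : BddBelow SS := by
      refine ⟨0, fun r hr => ?_⟩
      obtain ⟨ψ, _, _, _, hr⟩ := hr
      rw [hr]; exact norm_nonneg _
    have hC0 : 0 ≤ sInf SS := by
      apply Real.sInf_nonneg
      intro r hr
      obtain ⟨ψ, _, _, _, hr⟩ := hr
      rw [hr]; exact norm_nonneg _
    have hCle : ∀ ψ : L2S m,
        (∀ᵐ x ∂(volume : Measure (ESp m)), ((ψ : ESp m → ℂ) x).im = 0) →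
        (∀ᵐ x ∂(volume : Measure (ESp m)), x ∉ Ω → (ψ : ESp m → ℂ) x = 0) →
        sInf SS * ‖ψ‖ ≤ ‖S0 ψ‖ := by
      intro ψ hre hsupp
      rcases eq_or_ne ‖ψ‖ 0 with h0 | h0
      · rw [h0, mul_zero]; exact norm_nonneg _
      · have hpos : 0 < ‖ψ‖ := (norm_nonneg ψ).lt_of_ne (Ne.symm h0)
        set c : ℂ := ((‖ψ‖⁻¹ : ℝ) : ℂ) with hc
        have hnc : ‖c‖ = ‖ψ‖⁻¹ := by
          rw [hc, Complex.norm_real, Real.norm_of_nonneg (by positivity)]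
        have hmem : ‖S0 (c • ψ)‖ ∈ SS := by
          refine ⟨c • ψ, ?_, ?_, ?_, rfl⟩
          · filter_upwards [Lp.coeFn_smul c ψ, hre] with x hx hx2
            rw [hx, Pi.smul_apply, smul_eq_mul, hc, Complex.mul_im, Complex.ofReal_re,
              Complex.ofReal_im, hx2]
            ring
          · filter_upwards [Lp.coeFn_smul c ψ, hsupp] with x hx hx2 hxΩ
            rw [hx, Pi.smul_apply, hx2 hxΩ, smul_zero]
          · rw [norm_smul, hnc, inv_mul_cancel₀ h0]
        have hle := csInf_le hbdd hmem
        rw [hS0smul c ψ, norm_smul, hnc] at hle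
        calc sInf SS * ‖ψ‖ ≤ (‖ψ‖⁻¹ * ‖S0 ψ‖) * ‖ψ‖ :=
              mul_le_mul_of_nonneg_right hle (norm_nonneg ψ)
          _ = ‖S0 ψ‖ := by field_simp
    -- cross term vanishes
    have hcross : (⟪S0 φ, S0 μ⟫_ℂ).im = 0 := by
      have h1 := St16Aux.herm hF φ hφre
      have h2 := St16Aux.herm hF μ hμre
      have hi : ⟪S0 φ, S0 μ⟫_ℂ = ⟪F (S0 φ), F (S0 μ)⟫_ℂ := (F.inner_map_map _ _).symm
      rw [hi]
      refine St16Aux.cross (fun ξ => 2 * Real.sin (‖ξ‖ ^ 2 / (2 * (f₁⁻¹ - f₂⁻¹)⁻¹))) ?_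
        (F (S0 φ)) (F (S0 μ)) (F φ) (F μ) (hS0 φ) (hS0 μ) h1 h2
      intro ξ
      simp
    have hdecomp : S0 (φ + Complex.I • μ) = S0 φ + Complex.I • S0 μ := by
      rw [hS0add, hS0smul]
    have hnormsq : ‖S0 (φ + Complex.I • μ)‖ ^ 2 = ‖S0 φ‖ ^ 2 + ‖S0 μ‖ ^ 2 := by
      rw [hdecomp]
      have h2 : RCLike.re (⟪S0 φ, Complex.I • S0 μ⟫_ℂ) = 0 := by
        rw [inner_smul_right]
        show (Complex.I * ⟪S0 φ, S0 μ⟫_ℂ).re = 0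
        rw [Complex.mul_re, Complex.I_re, Complex.I_im, hcross]
        ring
      have h3 : ‖Complex.I • S0 μ‖ = ‖S0 μ‖ := by
        rw [norm_smul, Complex.norm_I, one_mul]
      rw [@norm_add_sq ℂ _ _ _ _ (S0 φ) (Complex.I • S0 μ), h2, h3]
      ring
    have hkey : sInf SS * Real.sqrt (‖φ‖ ^ 2 + ‖μ‖ ^ 2) ≤ ‖S0 (φ + Complex.I • μ)‖ := by
      have hφ' := hCle φ hφre hφsupp
      have hμ' := hCle μ hμre hμsupp
      have hsq : (sInf SS) ^ 2 * (‖φ‖ ^ 2 + ‖μ‖ ^ 2) ≤ ‖S0 (φ + Complex.I • μ)‖ ^ 2 := by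
        rw [hnormsq]
        nlinarith [hφ', hμ', hC0, norm_nonneg φ, norm_nonneg μ, norm_nonneg (S0 φ),
          norm_nonneg (S0 μ), mul_nonneg hC0 (norm_nonneg φ), mul_nonneg hC0 (norm_nonneg μ)]
      have h4 := Real.sqrt_le_sqrt hsq
      rwa [Real.sqrt_mul (by positivity), Real.sqrt_sq hC0, Real.sqrt_sq (norm_nonneg _)] at h4
    have hfin : (Real.sqrt 2)⁻¹ * sInf SS * Real.sqrt (‖φ‖ ^ 2 + ‖μ‖ ^ 2)
        ≤ Real.sqrt (‖(S2 φ μ).1‖ ^ 2 + ‖(S2 φ μ).2‖ ^ 2) := by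
      calc (Real.sqrt 2)⁻¹ * sInf SS * Real.sqrt (‖φ‖ ^ 2 + ‖μ‖ ^ 2)
          = (Real.sqrt 2)⁻¹ * (sInf SS * Real.sqrt (‖φ‖ ^ 2 + ‖μ‖ ^ 2)) := by ring
        _ ≤ (Real.sqrt 2)⁻¹ * ‖S0 (φ + Complex.I • μ)‖ :=
            mul_le_mul_of_nonneg_left hkey (by positivity)
        _ ≤ Real.sqrt (‖(S2 φ μ).1‖ ^ 2 + ‖(S2 φ μ).2‖ ^ 2) := parti φ μ
    exact hfin
end
end

section
/- Smallest singular value of the two-distance contrast-transfer matrix: let f₁ ≠ f₂ be positive reals and f₋ := (f₁⁻¹ − f₂⁻¹)⁻¹. For t ∈ ℝ define the real 2×2 matrix S(t) := [[sin(t/(2f₁)), −cos(t/(2f₁))], [sin(t/(2f₂)), −cos(t/(2f₂))]]. Then the smallest singular value σ₀(t) of S(t) satisfies σ₀(t)² = 1 − |cos(t/(2f₋))| ≥ (1/2)·sin(t/(2f₋))²; equivalently, for every v ∈ ℂ²: ‖S(t)v‖² ≥ (1 − |cos(t/(2f₋))|)·‖v‖² ≥ (1/2)·sin(t/(2f₋))²·‖v‖².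 -/
open Real

noncomputable section

private lemma keylem (A B C D c p q : ℝ) (h1 : A^2+B^2=1) (h2 : C^2+D^2=1)
    (hc : c = B*D+A*C) :
    (A*p-B*q)^2 + (C*p-D*q)^2 ≥ (1-|c|)*(p^2+q^2) := by
  rcases abs_cases c with ⟨h, h0⟩ | ⟨h, h0⟩ <;> rw [h]
  · have key : (1+c)*((A*p-B*q)^2+(C*p-D*q)^2 - (1-c)*(p^2+q^2))
        = c*((A+C)*p-(B+D)*q)^2 := by
      subst hc
      linear_combination (p^2 + 2*C*D*p*q + C^2*q^2 - C^2*p^2) * h1 +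
        (q^2 - B^2*q^2 + B^2*p^2 + 2*A*B*p*q) * h2
    nlinarith [key, mul_nonneg h0 (sq_nonneg ((A+C)*p-(B+D)*q))]
  · have key : (1-c)*((A*p-B*q)^2+(C*p-D*q)^2 - (1+c)*(p^2+q^2))
        = -c*((A-C)*p-(B-D)*q)^2 := by
      subst hc
      linear_combination (p^2 + 2*C*D*p*q + C^2*q^2 - C^2*p^2) * h1 +
        (q^2 - B^2*q^2 + B^2*p^2 + 2*A*B*p*q) * h2
    nlinarith [key, mul_nonneg (neg_nonneg.mpr h0.le) (sq_nonneg ((A-C)*p-(B-D)*q))]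

private lemma normsq_aux (A B : ℝ) (x y : ℂ) :
    ‖(A:ℂ)*x - (B:ℂ)*y‖^2 = (A*x.re-B*y.re)^2 + (A*x.im-B*y.im)^2 := by
  rw [Complex.sq_norm, Complex.normSq_apply]
  simp
  ring

private lemma normsq_c (x : ℂ) : ‖x‖^2 = x.re^2 + x.im^2 := by
  rw [Complex.sq_norm, Complex.normSq_apply]; ring

/-- **smallest singular value of the two-distance contrast-transfer matrix.**
Let `f₁ ≠ f₂` be positive, `f₋ = (f₁⁻¹ − f₂⁻¹)⁻¹`, and
`S(t) = [[sin(t/(2f₁)), −cos(t/(2f₁))], [sin(t/(2f₂)), −cos(t/(2f₂))]]`.  Then the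
smallest singular value `σ₀(t)` of `S(t)` (acting on `ℂ²`) satisfies
`σ₀(t)² = 1 − |cos(t/(2f₋))| ≥ (1/2)sin(t/(2f₋))²`; equivalently, for every `v ∈ ℂ²`,
`‖S(t)v‖² ≥ (1 − |cos(t/(2f₋))|)‖v‖² ≥ (1/2)sin(t/(2f₋))²‖v‖²`. -/
theorem statement17 (f₁ f₂ t : ℝ) (hf₁ : 0 < f₁) (hf₂ : 0 < f₂) (hne : f₁ ≠ f₂) :
    sInf {r : ℝ | ∃ v : Fin 2 → ℂ, (∑ i, ‖v i‖ ^ 2) = 1 ∧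
        r = ∑ i, ‖(Matrix.mulVec
            !![((Real.sin (t / (2 * f₁)) : ℝ) : ℂ), -((Real.cos (t / (2 * f₁)) : ℝ) : ℂ);
               ((Real.sin (t / (2 * f₂)) : ℝ) : ℂ), -((Real.cos (t / (2 * f₂)) : ℝ) : ℂ)]
            v) i‖ ^ 2}
      = 1 - |Real.cos (t / (2 * (f₁⁻¹ - f₂⁻¹)⁻¹))| ∧
    1 - |Real.cos (t / (2 * (f₁⁻¹ - f₂⁻¹)⁻¹))|
      ≥ (1 / 2) * Real.sin (t / (2 * (f₁⁻¹ - f₂⁻¹)⁻¹)) ^ 2 ∧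
    ∀ v : Fin 2 → ℂ,
      (∑ i, ‖(Matrix.mulVec
            !![((Real.sin (t / (2 * f₁)) : ℝ) : ℂ), -((Real.cos (t / (2 * f₁)) : ℝ) : ℂ);
               ((Real.sin (t / (2 * f₂)) : ℝ) : ℂ), -((Real.cos (t / (2 * f₂)) : ℝ) : ℂ)]
            v) i‖ ^ 2)
        ≥ (1 - |Real.cos (t / (2 * (f₁⁻¹ - f₂⁻¹)⁻¹))|) * ∑ i, ‖v i‖ ^ 2 ∧
      (1 - |Real.cos (t / (2 * (f₁⁻¹ - f₂⁻¹)⁻¹))|) * (∑ i, ‖v i‖ ^ 2)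
        ≥ (1 / 2) * Real.sin (t / (2 * (f₁⁻¹ - f₂⁻¹)⁻¹)) ^ 2 * ∑ i, ‖v i‖ ^ 2 := by
  have hd : f₁⁻¹ - f₂⁻¹ ≠ 0 := sub_ne_zero.mpr (fun h => hne (inv_injective h))
  have hab : t / (2 * (f₁⁻¹ - f₂⁻¹)⁻¹) = t / (2 * f₁) - t / (2 * f₂) := by
    field_simp
  rw [hab]
  set a := t / (2 * f₁) with ha
  set b := t / (2 * f₂) with hb
  set c := Real.cos (a - b) with hcdef
  have hc : c = Real.cos a * (Real.cos b) + Real.sin a * Real.sin b := Real.cos_sub a b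
  have h1 : Real.sin a ^ 2 + Real.cos a ^ 2 = 1 := Real.sin_sq_add_cos_sq a
  have h2 : Real.sin b ^ 2 + Real.cos b ^ 2 = 1 := Real.sin_sq_add_cos_sq b
  have habs : |c| ≤ 1 := abs_le.mpr ⟨Real.neg_one_le_cos _, Real.cos_le_one _⟩
  -- the matrix
  set M : Matrix (Fin 2) (Fin 2) ℂ :=
    !![((Real.sin a : ℝ) : ℂ), -((Real.cos a : ℝ) : ℂ);
       ((Real.sin b : ℝ) : ℂ), -((Real.cos b : ℝ) : ℂ)] with hM
  -- mulVec entries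
  have hmv : ∀ v : Fin 2 → ℂ,
      (M.mulVec v 0 = (Real.sin a : ℂ) * v 0 - (Real.cos a : ℂ) * v 1) ∧
      (M.mulVec v 1 = (Real.sin b : ℂ) * v 0 - (Real.cos b : ℂ) * v 1) := by
    intro v
    constructor <;>
      simp [hM, Matrix.mulVec, dotProduct, Fin.sum_univ_two] <;> ring
  -- main quadratic-form lower bound
  have hmain : ∀ v : Fin 2 → ℂ,
      (∑ i, ‖M.mulVec v i‖ ^ 2) ≥ (1 - |c|) * ∑ i, ‖v i‖ ^ 2 := by
    intro v
    obtain ⟨h0, h1'⟩ := hmv v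
    rw [Fin.sum_univ_two, Fin.sum_univ_two, h0, h1', normsq_aux, normsq_aux,
      normsq_c (v 0), normsq_c (v 1)]
    have k1 := keylem (Real.sin a) (Real.cos a) (Real.sin b) (Real.cos b) c
      (v 0).re (v 1).re h1 h2 (by linarith [hc])
    have k2 := keylem (Real.sin a) (Real.cos a) (Real.sin b) (Real.cos b) c
      (v 0).im (v 1).im h1 h2 (by linarith [hc])
    nlinarith [k1, k2]
  -- witness achieving the bound
  have hwit : ∃ v : Fin 2 → ℂ, (∑ i, ‖v i‖ ^ 2) = 1 ∧
      (∑ i, ‖M.mulVec v i‖ ^ 2) = 1 - |c| := by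
    set m := (a + b) / 2 with hm
    have hcos2 : Real.cos (a - b) = 1 - 2 * Real.sin ((a-b)/2) ^ 2 := by
      have h := Real.cos_two_mul ((a-b)/2)
      have h2' := Real.sin_sq_add_cos_sq ((a-b)/2)
      rw [show 2*((a-b)/2) = a-b by ring] at h
      linarith
    rcases le_or_gt 0 c with h0 | h0
    · refine ⟨![((Real.cos m : ℝ) : ℂ), ((Real.sin m : ℝ) : ℂ)], ?_, ?_⟩
      · simp only [Fin.sum_univ_two, Matrix.cons_val_zero, Matrix.cons_val_one,
          Matrix.head_cons, Complex.norm_real, Real.norm_eq_abs, sq_abs]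
        exact Real.cos_sq_add_sin_sq m
      · obtain ⟨e0, e1⟩ := hmv ![((Real.cos m : ℝ) : ℂ), ((Real.sin m : ℝ) : ℂ)]
        rw [Fin.sum_univ_two, e0, e1]
        simp only [Matrix.cons_val_zero, Matrix.cons_val_one, Matrix.head_cons]
        rw [normsq_aux, normsq_aux]
        simp only [Complex.ofReal_re, Complex.ofReal_im]
        have s1 : Real.sin a * Real.cos m - Real.cos a * Real.sin m
            = Real.sin ((a-b)/2) := by
          rw [← Real.sin_sub, show a - m = (a-b)/2 by rw [hm]; ring]
        have s2 : Real.sin b * Real.cos m - Real.cos b * Real.sin m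
            = - Real.sin ((a-b)/2) := by
          rw [← Real.sin_sub, show b - m = -((a-b)/2) by rw [hm]; ring, Real.sin_neg]
        rw [abs_of_nonneg h0, hcdef, hcos2]
        rw [s1, s2]
        ring
    · refine ⟨![-((Real.sin m : ℝ) : ℂ), ((Real.cos m : ℝ) : ℂ)], ?_, ?_⟩
      · simp only [Fin.sum_univ_two, Matrix.cons_val_zero, Matrix.cons_val_one,
          Matrix.head_cons, norm_neg, Complex.norm_real, Real.norm_eq_abs, sq_abs]
        exact Real.sin_sq_add_cos_sq m
      · obtain ⟨e0, e1⟩ := hmv ![-((Real.sin m : ℝ) : ℂ), ((Real.cos m : ℝ) : ℂ)]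
        rw [Fin.sum_univ_two, e0, e1]
        simp only [Matrix.cons_val_zero, Matrix.cons_val_one, Matrix.head_cons]
        rw [show ((Real.sin a : ℝ) : ℂ) * -((Real.sin m : ℝ) : ℂ)
              - ((Real.cos a : ℝ) : ℂ) * ((Real.cos m : ℝ) : ℂ)
            = ((-Real.cos (a - m) : ℝ) : ℂ) by
          push_cast [Real.cos_sub]; ring]
        rw [show ((Real.sin b : ℝ) : ℂ) * -((Real.sin m : ℝ) : ℂ)
              - ((Real.cos b : ℝ) : ℂ) * ((Real.cos m : ℝ) : ℂ)
            = ((-Real.cos (b - m) : ℝ) : ℂ) by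
          push_cast [Real.cos_sub]; ring]
        have hs : Real.sin ((a-b)/2)^2 + Real.cos ((a-b)/2)^2 = 1 :=
          Real.sin_sq_add_cos_sq _
        have e2 : a - m = (a-b)/2 := by rw [hm]; ring
        have e3 : b - m = -((a-b)/2) := by rw [hm]; ring
        rw [Complex.norm_real, Complex.norm_real, Real.norm_eq_abs, Real.norm_eq_abs,
          sq_abs, sq_abs, e2, e3, Real.cos_neg, abs_of_neg h0, hcdef, hcos2]
        nlinarith [hs]
  refine ⟨?_, ?_, ?_⟩
  · apply le_antisymm
    · obtain ⟨v, hv1, hv2⟩ := hwit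
      apply csInf_le
      · refine ⟨1 - |c|, ?_⟩
        rintro r ⟨w, hw1, rfl⟩
        have := hmain w
        rw [hw1] at this
        linarith
      · exact ⟨v, hv1, hv2.symm⟩
    · apply le_csInf
      · obtain ⟨v, hv1, hv2⟩ := hwit
        exact ⟨1 - |c|, v, hv1, hv2.symm⟩
      · rintro r ⟨w, hw1, rfl⟩
        have := hmain w
        rw [hw1] at this
        linarith
  · have hs : Real.sin (a-b)^2 + Real.cos (a-b)^2 = 1 := Real.sin_sq_add_cos_sq _
    nlinarith [sq_nonneg (1 - |c|), sq_abs c, hs]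
  · intro v
    refine ⟨hmain v, ?_⟩
    have hs : Real.sin (a-b)^2 + Real.cos (a-b)^2 = 1 := Real.sin_sq_add_cos_sq _
    have hb2 : 1 - |c| ≥ (1/2) * Real.sin (a-b)^2 := by
      nlinarith [sq_nonneg (1 - |c|), sq_abs c, hs]
    have hnn : (0:ℝ) ≤ ∑ i, ‖v i‖ ^ 2 :=
      Finset.sum_nonneg fun i _ => sq_nonneg _
    exact mul_le_mul_of_nonneg_right hb2 hnn
end
end

section
/- Null space of the linearized forward operator without support constraint: for every f > 0 and h ∈ L²(ℝ^m, ℂ), one has Th = 0 in L²(ℝ^m) if and only if there exists a real-valued g ∈ L²(ℝ^m) with h = i·D⁻¹(g). Thus the kernel of T equals { i·D⁻¹(g) : g ∈ L²(ℝ^m) real-valued }; equivalently, Th = 0 if and only if D(h) is purely imaginary almost everywhere. -/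
open MeasureTheory Complex Real Filter
open scoped ENNReal InnerProductSpace

noncomputable section

/-- **null space of the linearized forward operator without support
constraint.**  For every `f > 0` and `h ∈ L²(ℝ^m, ℂ)`: `Th = 0` iff there is a
real-valued `g ∈ L²` with `h = i·D⁻¹(g)`; equivalently, `Th = 0` iff `D(h)` is purely
imaginary almost everywhere. -/
theorem statement18 (m : ℕ) (hm : 1 ≤ m) (f : ℝ) (hf : 0 < f)
    (F D : L2S m ≃ₗᵢ[ℂ] L2S m) (hF : IsFourierTransform m F) (hD : IsFresnel m f F D)
    (T : L2S m → L2S m) (hT : IsCTFOp m D T)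
    (h : L2S m) :
    (T h = 0 ↔ ∃ g : L2S m,
      (∀ᵐ x ∂(volume : Measure (ESp m)), ((g : ESp m → ℂ) x).im = 0) ∧
      h = Complex.I • D.symm g) ∧
    (T h = 0 ↔ ∀ᵐ x ∂(volume : Measure (ESp m)), ((D h : ESp m → ℂ) x).re = 0) := by
  have key : T h = 0 ↔ ∀ᵐ x ∂(volume : Measure (ESp m)), ((D h : ESp m → ℂ) x).re = 0 := by
    rw [MeasureTheory.Lp.eq_zero_iff_ae_eq_zero]
    constructor
    · intro h0
      filter_upwards [hT h, h0] with x hx hy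
      have : ((2 * ((D h : ESp m → ℂ) x).re : ℝ) : ℂ) = 0 := by
        rw [← hx, hy]; rfl
      have := Complex.ofReal_eq_zero.mp this
      linarith
    · intro hre
      filter_upwards [hT h, hre] with x hx hy
      rw [hx, hy]; simp
  refine ⟨key.trans ?_, key⟩
  constructor
  · intro hre
    refine ⟨(-Complex.I) • D h, ?_, ?_⟩
    · filter_upwards [MeasureTheory.Lp.coeFn_smul (-Complex.I) (D h), hre] with x hx hre'
      rw [hx]
      simp [Complex.mul_im, hre']
    · have hsymm : D.symm ((-Complex.I) • D h) = (-Complex.I) • h := by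
        rw [_root_.map_smul, LinearIsometryEquiv.symm_apply_apply]
      rw [hsymm, smul_smul]
      simp [mul_neg, Complex.I_mul_I]
  · rintro ⟨g, hg, rfl⟩
    have hDh : D (Complex.I • D.symm g) = Complex.I • g := by
      rw [_root_.map_smul, LinearIsometryEquiv.apply_symm_apply]
    rw [hDh]
    filter_upwards [MeasureTheory.Lp.coeFn_smul Complex.I g, hg] with x hx hgx
    rw [hx]
    simp [Complex.mul_re, hgx]
end
end

section
/- Contrast transfer function form of the forward operator: let f > 0. For all real-valued φ, μ ∈ L²(ℝ^m), T(iφ − μ) = 2F⁻¹( ξ ↦ sin(|ξ|²/(2f))·F(φ)(ξ) − cos(|ξ|²/(2f))·F(μ)(ξ) ). In particular, for every α ∈ [0, π) and every real-valued φ ∈ L²(ℝ^m), T(i·e^{−iα}·φ) = S_α φ := 2F⁻¹(s_α·F(φ)) with s_α(ξ) = sin(|ξ|²/(2f) + α); hence for homogeneous objects the forward operator T reduces to the Fourier multiplier 2s_α. -/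
open MeasureTheory Complex Real Filter
open scoped ENNReal InnerProductSpace

noncomputable section

namespace S19
def Cst (m : ℕ) : L2S m →L[ℝ] L2S m :=
  (Complex.conjCLE.toContinuousLinearMap).compLpL 2 volume

lemma Cst_coeFn {m : ℕ} (u : L2S m) :
    (Cst m u : ESp m → ℂ) =ᵐ[volume] fun x => starRingEnd ℂ ((u : ESp m → ℂ) x) :=
  ContinuousLinearMap.coeFn_compLpL _ _

def Rst (m : ℕ) : L2S m → L2S m :=
  Lp.compMeasurePreserving (fun x : ESp m => -x) (Measure.measurePreserving_neg _)

lemma Rst_coeFn {m : ℕ} (u : L2S m) :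
    (Rst m u : ESp m → ℂ) =ᵐ[volume] fun x => (u : ESp m → ℂ) (-x) :=
  Lp.coeFn_compMeasurePreserving _ _

lemma Rst_cont (m : ℕ) : Continuous (Rst m) :=
  (Lp.isometry_compMeasurePreserving _).continuous

lemma ae_neg {m : ℕ} {g h : ESp m → ℂ} (hg : g =ᵐ[volume] h) :
    (fun ξ : ESp m => g (-ξ)) =ᵐ[volume] fun ξ => h (-ξ) :=
  (Measure.measurePreserving_neg (volume : Measure (ESp m))).quasiMeasurePreserving.ae_eq_comp hg

lemma key {m : ℕ} (F : L2S m ≃ₗᵢ[ℂ] L2S m) (hF : IsFourierTransform m F) (v : L2S m) :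
    F (Cst m v) = Cst m (Rst m (F v)) := by
  have hdense : DenseRange ((↑) : Lp.simpleFunc ℂ 2 (volume : Measure (ESp m)) → L2S m) :=
    Lp.simpleFunc.denseRange (by norm_num)
  have hA : Continuous fun v : L2S m => F (Cst m v) :=
    F.continuous.comp (Cst m).continuous
  have hB : Continuous fun v : L2S m => Cst m (Rst m (F v)) :=
    (Cst m).continuous.comp ((Rst_cont m).comp F.continuous)
  have H : (fun v : L2S m => F (Cst m v)) = fun v => Cst m (Rst m (F v)) := by
    refine hdense.equalizer hA hB (funext fun s => ?_)
    simp only [Function.comp_apply]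
    set g : ESp m → ℂ := ⇑(Lp.simpleFunc.toSimpleFunc s) with hg
    have heq : g =ᵐ[volume] ⇑(s : L2S m) := Lp.simpleFunc.toSimpleFunc_eq_toFun s
    have hmem : MemLp g 2 volume := Lp.simpleFunc.memLp s
    have hint : Integrable g volume :=
      (SimpleFunc.memLp_iff_integrable (by norm_num) (by norm_num)).mp hmem
    have asm : AEStronglyMeasurable (fun x => starRingEnd ℂ (g x)) volume :=
      Complex.continuous_conj.comp_aestronglyMeasurable hmem.aestronglyMeasurable
    have hint' : Integrable (fun x => starRingEnd ℂ (g x)) volume :=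
      hint.norm.mono' asm (ae_of_all _ fun x => by simp)
    have hnorm : eLpNorm (fun x => starRingEnd ℂ (g x)) 2 volume = eLpNorm g 2 volume := by
      rw [← eLpNorm_norm, ← eLpNorm_norm g]; simp
    have hmem' : MemLp (fun x => starRingEnd ℂ (g x)) 2 volume :=
      ⟨asm, by rw [hnorm]; exact hmem.2⟩
    have hs : (s : L2S m) = hmem.toLp g :=
      Lp.ext (heq.symm.trans hmem.coeFn_toLp.symm)
    have hCs : Cst m (s : L2S m) = hmem'.toLp (fun x => starRingEnd ℂ (g x)) := by
      refine Lp.ext ?_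
      filter_upwards [Cst_coeFn (s : L2S m), heq,
        hmem'.coeFn_toLp (f := fun x => starRingEnd ℂ (g x))] with x h1 h2 h3
      rw [h1, h3, ← h2]
    refine Lp.ext ?_
    rw [hCs, hs]
    have hL := hF _ hint' hmem'
    have hR := hF g hint hmem
    -- RHS coeFn
    have hR1 : (Cst m (Rst m (F (hmem.toLp g))) : ESp m → ℂ) =ᵐ[volume]
        fun ξ => starRingEnd ℂ ((F (hmem.toLp g) : ESp m → ℂ) (-ξ)) := by
      filter_upwards [Cst_coeFn (Rst m (F (hmem.toLp g))),
        (Rst_coeFn (F (hmem.toLp g))).fun_comp (starRingEnd ℂ)] with ξ h1 h2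
      rw [h1]; exact h2
    have hR2 : (fun ξ : ESp m => starRingEnd ℂ ((F (hmem.toLp g) : ESp m → ℂ) (-ξ)))
        =ᵐ[volume] fun ξ => starRingEnd ℂ ((((2 * π) ^ (-(m : ℝ) / 2) : ℝ) : ℂ) *
          ∫ x, g x * Complex.exp (-Complex.I * ((⟪-ξ, x⟫_ℝ : ℝ) : ℂ))) :=
      (ae_neg hR).fun_comp (starRingEnd ℂ)
    refine hL.trans (((hR1.trans hR2).trans (ae_of_all _ fun ξ => ?_)).symm)
    beta_reduce
    rw [map_mul, Complex.conj_ofReal, ← integral_conj]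
    refine congrArg _ (integral_congr_ae (ae_of_all _ fun x => ?_))
    beta_reduce
    rw [map_mul, ← Complex.exp_conj]
    congr 1
    rw [map_mul, map_neg, Complex.conj_I, Complex.conj_ofReal, inner_neg_left]
    push_cast
    ring_nf
  exact congrFun H v
lemma exp_I_ofReal (c : ℝ) :
    Complex.exp (Complex.I * c) = (Real.cos c : ℂ) + (Real.sin c : ℂ) * Complex.I := by
  rw [mul_comm, Complex.exp_mul_I, ← Complex.ofReal_cos, ← Complex.ofReal_sin]

lemma exp_neg_I_ofReal (c : ℝ) :
    Complex.exp (-Complex.I * c) = (Real.cos c : ℂ) - (Real.sin c : ℂ) * Complex.I := by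
  rw [show -Complex.I * (c : ℂ) = ((-c : ℝ) : ℂ) * Complex.I by push_cast; ring,
    Complex.exp_mul_I, Complex.ofReal_neg, Complex.cos_neg, Complex.sin_neg,
    ← Complex.ofReal_cos, ← Complex.ofReal_sin]
  ring

lemma conj_exp_neg_I_ofReal (c : ℝ) :
    starRingEnd ℂ (Complex.exp (-Complex.I * c)) = Complex.exp (Complex.I * c) := by
  rw [← Complex.exp_conj, map_mul, map_neg, Complex.conj_I, Complex.conj_ofReal, neg_neg]

lemma conj_form {m : ℕ} (F : L2S m ≃ₗᵢ[ℂ] L2S m) (hF : IsFourierTransform m F) (v : L2S m) :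
    (F (Cst m v) : ESp m → ℂ) =ᵐ[volume]
      fun ξ => starRingEnd ℂ ((F v : ESp m → ℂ) (-ξ)) := by
  rw [key F hF v]
  filter_upwards [Cst_coeFn (Rst m (F v)), (Rst_coeFn (F v)).fun_comp (starRingEnd ℂ)]
    with ξ h1 h2
  rw [h1]; exact h2

lemma master {m : ℕ} {f : ℝ} (F D : L2S m ≃ₗᵢ[ℂ] L2S m) (hF : IsFourierTransform m F)
    (hD : IsFresnel m f F D) (T : L2S m → L2S m) (hT : IsCTFOp m D T) (u : L2S m) :
    (F (T u) : ESp m → ℂ) =ᵐ[volume] fun ξ =>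
      Complex.exp (-Complex.I * ((‖ξ‖ ^ 2 / (2 * f) : ℝ) : ℂ)) * (F u : ESp m → ℂ) ξ
      + Complex.exp (Complex.I * ((‖ξ‖ ^ 2 / (2 * f) : ℝ) : ℂ)) * (F (Cst m u) : ESp m → ℂ) ξ := by
  have h1 : T u = D u + Cst m (D u) := by
    refine Lp.ext ?_
    filter_upwards [hT u, Cst_coeFn (D u), Lp.coeFn_add (D u) (Cst m (D u))] with x hx h2 h3
    rw [hx, h3, Pi.add_apply, h2, Complex.add_conj]
  have h2 : F (T u) = F (D u) + F (Cst m (D u)) := by rw [h1, map_add]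
  rw [h2]
  filter_upwards [Lp.coeFn_add (F (D u)) (F (Cst m (D u))), hD u, conj_form F hF (D u),
    ae_neg (hD u), conj_form F hF u] with ξ hadd hDu hCDu hDneg hCu
  rw [hadd, Pi.add_apply, hDu, hCDu, hDneg, norm_neg, map_mul, conj_exp_neg_I_ofReal, hCu]

end S19


set_option maxHeartbeats 1000000 in
/-- **contrast transfer function form of the forward operator.**
For all real-valued `φ, μ ∈ L²(ℝ^m)`:
`T(iφ − μ) = 2F⁻¹(sin(|ξ|²/(2f))·Fφ − cos(|ξ|²/(2f))·Fμ)`; in particular, for every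
`α ∈ [0, π)` and real-valued `φ`, `T(i e^{−iα} φ) = S_α φ = 2F⁻¹(s_α·Fφ)` with
`s_α(ξ) = sin(|ξ|²/(2f) + α)`, i.e. for homogeneous objects `T` reduces to the Fourier
multiplier `2 s_α`. -/
theorem statement19 (m : ℕ) (hm : 1 ≤ m) (f : ℝ) (hf : 0 < f)
    (F D : L2S m ≃ₗᵢ[ℂ] L2S m) (hF : IsFourierTransform m F) (hD : IsFresnel m f F D)
    (T : L2S m → L2S m) (hT : IsCTFOp m D T) :
    (∀ φ μ : L2S m,
      (∀ᵐ x ∂(volume : Measure (ESp m)), ((φ : ESp m → ℂ) x).im = 0) →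
      (∀ᵐ x ∂(volume : Measure (ESp m)), ((μ : ESp m → ℂ) x).im = 0) →
      (F (T (Complex.I • φ - μ)) : ESp m → ℂ) =ᵐ[volume] fun ξ =>
        2 * (((Real.sin (‖ξ‖ ^ 2 / (2 * f)) : ℝ) : ℂ) * (F φ : ESp m → ℂ) ξ
           - ((Real.cos (‖ξ‖ ^ 2 / (2 * f)) : ℝ) : ℂ) * (F μ : ESp m → ℂ) ξ)) ∧
    (∀ α : ℝ, 0 ≤ α → α < π → ∀ φ : L2S m,
      (∀ᵐ x ∂(volume : Measure (ESp m)), ((φ : ESp m → ℂ) x).im = 0) →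
      (F (T ((Complex.I * Complex.exp (-Complex.I * α)) • φ)) : ESp m → ℂ) =ᵐ[volume] fun ξ =>
        ((2 * Real.sin (‖ξ‖ ^ 2 / (2 * f) + α) : ℝ) : ℂ) * (F φ : ESp m → ℂ) ξ) := by
  constructor
  · intro φ μ hφ hμ
    have hCu : S19.Cst m (Complex.I • φ - μ) = (-Complex.I) • φ - μ := by
      refine Lp.ext ?_
      filter_upwards [S19.Cst_coeFn (Complex.I • φ - μ), Lp.coeFn_sub (Complex.I • φ) μ,
        Lp.coeFn_smul Complex.I φ, Lp.coeFn_sub ((-Complex.I) • φ) μ,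
        Lp.coeFn_smul (-Complex.I) φ, hφ, hμ] with x h1 h2 h3 h4 h5 hφx hμx
      rw [h1, h2, Pi.sub_apply, h3, Pi.smul_apply, h4, Pi.sub_apply, h5, Pi.smul_apply]
      simp only [smul_eq_mul]
      rw [map_sub, map_mul, Complex.conj_I,
        Complex.conj_eq_iff_im.mpr hφx, Complex.conj_eq_iff_im.mpr hμx]
    have e1 : F (Complex.I • φ - μ) = Complex.I • F φ - F μ := by
      rw [map_sub, _root_.map_smul]
    have e2 : F (S19.Cst m (Complex.I • φ - μ)) = (-Complex.I) • F φ - F μ := by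
      rw [hCu, map_sub, _root_.map_smul]
    have hFu : (F (Complex.I • φ - μ) : ESp m → ℂ) =ᵐ[volume]
        fun ξ => Complex.I * (F φ : ESp m → ℂ) ξ - (F μ : ESp m → ℂ) ξ := by
      rw [e1]
      filter_upwards [Lp.coeFn_sub (Complex.I • F φ) (F μ), Lp.coeFn_smul Complex.I (F φ)]
        with ξ h1 h2
      rw [h1, Pi.sub_apply, h2, Pi.smul_apply, smul_eq_mul]
    have hFCu : (F (S19.Cst m (Complex.I • φ - μ)) : ESp m → ℂ) =ᵐ[volume]
        fun ξ => -Complex.I * (F φ : ESp m → ℂ) ξ - (F μ : ESp m → ℂ) ξ := by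
      rw [e2]
      filter_upwards [Lp.coeFn_sub ((-Complex.I) • F φ) (F μ), Lp.coeFn_smul (-Complex.I) (F φ)]
        with ξ h1 h2
      rw [h1, Pi.sub_apply, h2, Pi.smul_apply, smul_eq_mul]
    filter_upwards [S19.master F D hF hD T hT (Complex.I • φ - μ), hFu, hFCu] with ξ h1 h2 h3
    rw [h1, h2, h3, S19.exp_neg_I_ofReal, S19.exp_I_ofReal]
    linear_combination (-2 * ((Real.sin (‖ξ‖ ^ 2 / (2 * f)) : ℝ) : ℂ)
      * (F φ : ESp m → ℂ) ξ) * Complex.I_mul_I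
  · intro α hα0 hαπ φ hφ
    have hCu : S19.Cst m ((Complex.I * Complex.exp (-Complex.I * α)) • φ)
        = ((-Complex.I) * Complex.exp (Complex.I * α)) • φ := by
      refine Lp.ext ?_
      filter_upwards [S19.Cst_coeFn ((Complex.I * Complex.exp (-Complex.I * α)) • φ),
        Lp.coeFn_smul (Complex.I * Complex.exp (-Complex.I * α)) φ,
        Lp.coeFn_smul ((-Complex.I) * Complex.exp (Complex.I * α)) φ, hφ] with x h1 h2 h3 hφx
      rw [h1, h2, Pi.smul_apply, h3, Pi.smul_apply]
      simp only [smul_eq_mul]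
      rw [map_mul, map_mul, Complex.conj_I, S19.conj_exp_neg_I_ofReal,
        Complex.conj_eq_iff_im.mpr hφx]
    have e1 : F ((Complex.I * Complex.exp (-Complex.I * α)) • φ)
        = (Complex.I * Complex.exp (-Complex.I * α)) • F φ := by rw [_root_.map_smul]
    have e2 : F (S19.Cst m ((Complex.I * Complex.exp (-Complex.I * α)) • φ))
        = ((-Complex.I) * Complex.exp (Complex.I * α)) • F φ := by
      rw [hCu, _root_.map_smul]
    have hFu : (F ((Complex.I * Complex.exp (-Complex.I * α)) • φ) : ESp m → ℂ) =ᵐ[volume]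
        fun ξ => Complex.I * Complex.exp (-Complex.I * α) * (F φ : ESp m → ℂ) ξ := by
      rw [e1]
      filter_upwards [Lp.coeFn_smul (Complex.I * Complex.exp (-Complex.I * α)) (F φ)] with ξ h1
      rw [h1, Pi.smul_apply, smul_eq_mul]
    have hFCu : (F (S19.Cst m ((Complex.I * Complex.exp (-Complex.I * α)) • φ)) : ESp m → ℂ)
        =ᵐ[volume]
        fun ξ => -Complex.I * Complex.exp (Complex.I * α) * (F φ : ESp m → ℂ) ξ := by
      rw [e2]
      filter_upwards [Lp.coeFn_smul ((-Complex.I) * Complex.exp (Complex.I * α)) (F φ)] with ξ h1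
      rw [h1, Pi.smul_apply, smul_eq_mul]
    filter_upwards [S19.master F D hF hD T hT ((Complex.I * Complex.exp (-Complex.I * α)) • φ),
      hFu, hFCu] with ξ h1 h2 h3
    rw [h1, h2, h3, S19.exp_neg_I_ofReal (‖ξ‖ ^ 2 / (2 * f)),
      S19.exp_I_ofReal (‖ξ‖ ^ 2 / (2 * f)), S19.exp_neg_I_ofReal α, S19.exp_I_ofReal α,
      Real.sin_add]
    rw [Complex.ofReal_mul, Complex.ofReal_add, Complex.ofReal_mul, Complex.ofReal_mul,
      Complex.ofReal_ofNat]
    linear_combination (-2 * (((Real.sin (‖ξ‖ ^ 2 / (2 * f)) : ℝ) : ℂ)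
        * ((Real.cos α : ℝ) : ℂ) + ((Real.cos (‖ξ‖ ^ 2 / (2 * f)) : ℝ) : ℂ)
        * ((Real.sin α : ℝ) : ℂ)) * (F φ : ESp m → ℂ) ξ) * Complex.I_mul_I
end
end
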